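/- arXiv:2410.03406 — 7 statements merged into one kernel-verified Lean document; each statement's English description precedes it below -/
import Mathlib

section
/- Let n ≥ 1 and let τ_1, …, τ_{n+1} be real-valued random variables on a probability space (Ω, 𝓕, P) that are exchangeable, i.e. for every permutation σ of {1, …, n+1} the joint distribution of (τ_{σ(1)}, …, τ_{σ(n+1)}) equals that of (τ_1, …, τ_{n+1}). Let α ∈ (0,1) satisfy ⌈(1−α)(n+1)⌉ ≤ n, and define the random threshold λ̂ = inf{λ ∈ ℝ : #{i ∈ {1,…,n} : τ_i ≤ λ} ≥ ⌈(1−α)(n+1)⌉}. Then P(τ_{n+1} ≤ λ̂) ≥ 1 − α. -/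
open MeasureTheory Finset

namespace ConformalAux
open scoped Classical

variable {m : ℕ}

noncomputable def cc (g : Fin m → ℝ) (l : ℝ) : ℕ :=
  (Finset.univ.filter (fun i => g i ≤ l)).card

noncomputable def Sset (k : ℕ) (g : Fin m → ℝ) : Set ℝ := {l | k ≤ cc g l}

noncomputable def Lam (k : ℕ) (g : Fin m → ℝ) : ℝ := sInf (Sset k g)

lemma cc_mono (g : Fin m → ℝ) {l l' : ℝ} (h : l ≤ l') : cc g l ≤ cc g l' := by
  apply Finset.card_le_card
  intro i hi
  simp only [mem_filter, mem_univ, true_and] at *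
  exact hi.trans h

lemma Sset_nonempty (k : ℕ) (hkm : k ≤ m) (g : Fin m → ℝ) (hm : 0 < m) :
    (Sset k g).Nonempty := by
  have : Nonempty (Fin m) := Fin.pos_iff_nonempty.mp hm
  have hne : (Finset.univ : Finset (Fin m)).Nonempty := Finset.univ_nonempty
  refine ⟨univ.sup' hne g, ?_⟩
  have : (univ.filter (fun i => g i ≤ univ.sup' hne g)) = univ := by
    apply Finset.filter_true_of_mem
    intro i _
    exact Finset.le_sup' g (mem_univ i)
  simp only [Sset, cc, Set.mem_setOf_eq, this, card_univ, Fintype.card_fin]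
  exact hkm

lemma Sset_bddBelow (k : ℕ) (hk1 : 1 ≤ k) (g : Fin m → ℝ) (hm : 0 < m) :
    BddBelow (Sset k g) := by
  have : Nonempty (Fin m) := Fin.pos_iff_nonempty.mp hm
  have hne : (Finset.univ : Finset (Fin m)).Nonempty := Finset.univ_nonempty
  refine ⟨univ.inf' hne g, ?_⟩
  intro l hl
  have hcard : 0 < (univ.filter (fun i => g i ≤ l)).card := lt_of_lt_of_le hk1 hl
  obtain ⟨i, hi⟩ := Finset.card_pos.mp hcard
  simp only [mem_filter, mem_univ, true_and] at hi
  exact le_trans (Finset.inf'_le g (mem_univ i)) hi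

lemma Lam_mem (k : ℕ) (hk1 : 1 ≤ k) (hkm : k ≤ m) (g : Fin m → ℝ) :
    Lam k g ∈ Sset k g := by
  have hm : 0 < m := lt_of_lt_of_le hk1 hkm
  have hne := Sset_nonempty k hkm g hm
  have hbdd := Sset_bddBelow k hk1 g hm
  by_contra hcon
  simp only [Sset, Set.mem_setOf_eq, not_le] at hcon
  set s := Lam k g with hs
  -- all i with s < g i
  have hF : (univ.filter (fun i => s < g i)).Nonempty := by
    by_contra hF
    rw [Finset.not_nonempty_iff_eq_empty, Finset.filter_eq_empty_iff] at hF
    have : (univ.filter (fun i => g i ≤ s)) = univ := by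
      apply Finset.filter_true_of_mem
      intro i hi
      exact le_of_not_gt (hF hi)
    have : cc g s = m := by simp [cc, this]
    omega
  set δ := (univ.filter (fun i => s < g i)).inf' hF g - s with hδ
  have hδpos : 0 < δ := by
    have : s < (univ.filter (fun i => s < g i)).inf' hF g := by
      rw [Finset.lt_inf'_iff]
      intro i hi
      simpa using (Finset.mem_filter.mp hi).2
    linarith
  have hcc : cc g (s + δ / 2) = cc g s := by
    unfold cc
    congr 1
    apply Finset.filter_congr
    intro i _
    constructor
    · intro h
      by_contra hlt
      push_neg at hlt
      have hmem : i ∈ univ.filter (fun i => s < g i) := by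
        simp [hlt]
      have := Finset.inf'_le g hmem
      rw [hδ] at h
      linarith
    · intro h; linarith
  obtain ⟨l, hl, hlt⟩ := Real.lt_sInf_add_pos hne (half_pos hδpos)
  have : (k : ℕ) ≤ cc g l := hl
  have h2 : cc g l ≤ cc g (s + δ / 2) := cc_mono g (le_of_lt hlt)
  omega

lemma Lam_le_iff (k : ℕ) (hk1 : 1 ≤ k) (hkm : k ≤ m) (g : Fin m → ℝ) (t : ℝ) :
    Lam k g ≤ t ↔ k ≤ cc g t := by
  have hm : 0 < m := lt_of_lt_of_le hk1 hkm
  constructor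
  · intro h
    exact le_trans (Lam_mem k hk1 hkm g) (cc_mono g h)
  · intro h
    exact csInf_le (Sset_bddBelow k hk1 g hm) h

lemma Lam_comp_perm (k : ℕ) (g : Fin m → ℝ) (σ : Equiv.Perm (Fin m)) :
    Lam k (fun i => g (σ i)) = Lam k g := by
  have hcc : ∀ l, cc (fun i => g (σ i)) l = cc g l := by
    intro l
    unfold cc
    apply Finset.card_bij (fun i _ => σ i)
    · intro a ha; simp only [mem_filter, mem_univ, true_and] at *; exact ha
    · intro a _ b _ h; exact σ.injective h
    · intro b hb
      refine ⟨σ.symm b, ?_, by simp⟩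
      simp only [mem_filter, mem_univ, true_and, Equiv.apply_symm_apply] at *
      exact hb
  have hSS : Sset k (fun i => g (σ i)) = Sset k g := by
    ext l; simp only [Sset, Set.mem_setOf_eq, hcc l]
  unfold Lam
  rw [hSS]

lemma measurable_Lam (k : ℕ) (hk1 : 1 ≤ k) (hkm : k ≤ m) :
    Measurable (fun g : Fin m → ℝ => Lam k g) := by
  apply measurable_of_Iic
  intro t
  have : (fun g : Fin m → ℝ => Lam k g) ⁻¹' Set.Iic t = {g | k ≤ cc g t} := by
    ext g
    simp only [Set.mem_preimage, Set.mem_Iic, Set.mem_setOf_eq]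
    exact Lam_le_iff k hk1 hkm g t
  rw [this]
  have hmc : Measurable (fun g : Fin m → ℝ => cc g t) := by
    have : (fun g : Fin m → ℝ => cc g t) =
        fun g => ∑ i : Fin m, if g i ≤ t then 1 else 0 := by
      funext g
      unfold cc
      rw [Finset.card_filter]
    rw [this]
    apply Finset.measurable_sum
    intro i _
    exact Measurable.ite (measurableSet_le (measurable_pi_apply i) measurable_const)
      measurable_const measurable_const
  exact hmc (measurableSet_Ici)

lemma cc_succ {n : ℕ} (g : Fin (n + 1) → ℝ) (l : ℝ) :
    cc g l = (univ.filter (fun i : Fin n => g i.castSucc ≤ l)).card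
      + (if g (Fin.last n) ≤ l then 1 else 0) := by
  unfold cc
  rw [Finset.card_filter, Finset.card_filter, Fin.sum_univ_castSucc]

/-- Key equivalence: threshold over first `n` vs over all `n+1`. -/
lemma key {n : ℕ} (k : ℕ) (hk1 : 1 ≤ k) (hkn : k ≤ n) (g : Fin (n + 1) → ℝ) :
    (g (Fin.last n) ≤
      sInf {l : ℝ | k ≤ (univ.filter (fun i : Fin n => g i.castSucc ≤ l)).card})
    ↔ g (Fin.last n) ≤ Lam k g := by
  set Sn : Set ℝ := {l : ℝ | k ≤ (univ.filter (fun i : Fin n => g i.castSucc ≤ l)).card}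
  have hkm : k ≤ n + 1 := hkn.trans (Nat.le_succ n)
  have hm : 0 < n + 1 := Nat.succ_pos n
  have hsub : Sn ⊆ Sset k g := by
    intro l hl
    simp only [Sn, Set.mem_setOf_eq] at hl
    simp only [Sset, Set.mem_setOf_eq, cc_succ]
    omega
  have hnpos : 0 < n := lt_of_lt_of_le hk1 hkn
  have : Nonempty (Fin n) := Fin.pos_iff_nonempty.mp hnpos
  have hne : (Finset.univ : Finset (Fin n)).Nonempty := Finset.univ_nonempty
  have hSn_ne : Sn.Nonempty := by
    refine ⟨univ.sup' hne (fun i => g i.castSucc), ?_⟩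
    have : (univ.filter (fun i : Fin n => g i.castSucc ≤ univ.sup' hne (fun i => g i.castSucc)))
        = univ := by
      apply Finset.filter_true_of_mem
      intro i _
      exact Finset.le_sup' (fun i : Fin n => g i.castSucc) (mem_univ i)
    simp only [Sn, Set.mem_setOf_eq, this, card_univ, Fintype.card_fin]
    exact hkn
  have hbddS := Sset_bddBelow k hk1 g hm
  have hbddSn : BddBelow Sn := hbddS.mono hsub
  constructor
  · intro h
    -- show g last is a lower bound for Sset k g
    refine le_csInf (Sset_nonempty k hkm g hm) ?_
    intro l hl
    by_contra hlt
    push_neg at hlt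
    -- l < g last, so count over all = count over first n
    have hcount : cc g l = (univ.filter (fun i : Fin n => g i.castSucc ≤ l)).card := by
      rw [cc_succ]
      have hng : ¬ g (Fin.last n) ≤ l := not_le.mpr hlt
      simp [hng]
    have hlSn : l ∈ Sn := by
      simp only [Sn, Set.mem_setOf_eq]
      have : (k : ℕ) ≤ cc g l := hl
      omega
    have : sInf Sn ≤ l := csInf_le hbddSn hlSn
    linarith
  · intro h
    have : Lam k g ≤ sInf Sn := le_csInf hSn_ne (fun l hl => csInf_le hbddS (hsub hl))
    linarith

end ConformalAux
open MeasureTheory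
open scoped ENNReal

open scoped Classical in
/-- Conformal calibration guarantee: for exchangeable scores `τ₁, …, τ_{n+1}` and the
conformal threshold `λ̂`, we have `P(τ_{n+1} ≤ λ̂) ≥ 1 - α`. -/
theorem conformal_calibration
    {Ω : Type*} [MeasurableSpace Ω] (P : Measure Ω) [IsProbabilityMeasure P]
    (n : ℕ) (hn : 1 ≤ n)
    (τ : Fin (n + 1) → Ω → ℝ) (hmeas : ∀ i, Measurable (τ i))
    (hexch : ∀ σ : Equiv.Perm (Fin (n + 1)),
      Measure.map (fun ω => fun i => τ (σ i) ω) P =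
        Measure.map (fun ω => fun i => τ i ω) P)
    (α : ℝ) (hα : α ∈ Set.Ioo (0 : ℝ) 1)
    (hceil : ⌈(1 - α) * ((n : ℝ) + 1)⌉₊ ≤ n)
    (lam : Ω → ℝ)
    (hlam : ∀ ω, lam ω = sInf {l : ℝ | ⌈(1 - α) * ((n : ℝ) + 1)⌉₊ ≤
      (Finset.univ.filter (fun i : Fin n => τ i.castSucc ω ≤ l)).card}) :
    ENNReal.ofReal (1 - α) ≤ P {ω | τ (Fin.last n) ω ≤ lam ω} := by
  classical
  set k : ℕ := ⌈(1 - α) * ((n : ℝ) + 1)⌉₊ with hk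
  have hα1 : 0 < 1 - α := by linarith [hα.2]
  have hk1 : 1 ≤ k := by
    rw [hk]
    rw [Nat.one_le_iff_ne_zero]
    intro hz
    have := Nat.ceil_pos.mpr (by positivity : (0:ℝ) < (1 - α) * ((n : ℝ) + 1))
    omega
  have hkn : k ≤ n := hceil
  have hkm : k ≤ n + 1 := hkn.trans (Nat.le_succ n)
  -- the vector map
  set T : Ω → (Fin (n + 1) → ℝ) := fun ω => fun i => τ i ω with hT
  have hTmeas : Measurable T := measurable_pi_lambda _ hmeas
  set μ : Measure (Fin (n + 1) → ℝ) := Measure.map T P with hμ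
  have hμprob : IsProbabilityMeasure μ := Measure.isProbabilityMeasure_map hTmeas.aemeasurable
  set B : Fin (n + 1) → Set (Fin (n + 1) → ℝ) :=
    fun i => {g | g i ≤ ConformalAux.Lam k g} with hB
  have hLammeas := ConformalAux.measurable_Lam (m := n + 1) k hk1 hkm
  have hBmeas : ∀ i, MeasurableSet (B i) :=
    fun i => measurableSet_le (measurable_pi_apply i) hLammeas
  -- the target set is the preimage of B (last)
  have hset : {ω | τ (Fin.last n) ω ≤ lam ω} = T ⁻¹' (B (Fin.last n)) := by
    ext ω
    simp only [Set.mem_setOf_eq, Set.mem_preimage, hB, hT]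
    rw [hlam ω]
    exact ConformalAux.key k hk1 hkn (fun i => τ i ω)
  -- each B i has the same measure as B (last)
  have hμBi : ∀ i, μ (B i) = μ (B (Fin.last n)) := by
    intro i
    set σ := Equiv.swap i (Fin.last n) with hσ
    have hperm : Measurable (fun g : Fin (n + 1) → ℝ => fun j => g (σ j)) :=
      measurable_pi_lambda _ (fun j => measurable_pi_apply (σ j))
    have hmap : Measure.map (fun g : Fin (n + 1) → ℝ => fun j => g (σ j)) μ = μ := by
      rw [hμ, Measure.map_map hperm hTmeas]
      have : (fun g : Fin (n + 1) → ℝ => fun j => g (σ j)) ∘ T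
          = fun ω => fun j => τ (σ j) ω := rfl
      rw [this, hexch σ]
    have hpre : (fun g : Fin (n + 1) → ℝ => fun j => g (σ j)) ⁻¹' (B (Fin.last n)) = B i := by
      ext g
      simp only [Set.mem_preimage, hB, Set.mem_setOf_eq]
      rw [ConformalAux.Lam_comp_perm k g σ]
      have : σ (Fin.last n) = i := Equiv.swap_apply_right i (Fin.last n)
      rw [this]
    calc μ (B i) = μ ((fun g : Fin (n + 1) → ℝ => fun j => g (σ j)) ⁻¹' (B (Fin.last n))) := by
          rw [hpre]
      _ = (Measure.map (fun g : Fin (n + 1) → ℝ => fun j => g (σ j)) μ) (B (Fin.last n)) := by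
          rw [Measure.map_apply hperm (hBmeas (Fin.last n))]
      _ = μ (B (Fin.last n)) := by rw [hmap]
  -- pointwise: at least k of the events hold
  have hpoint : ∀ g : Fin (n + 1) → ℝ,
      (k : ℝ≥0∞) ≤ ∑ i : Fin (n + 1), (B i).indicator (fun _ => (1 : ℝ≥0∞)) g := by
    intro g
    have hmem := ConformalAux.Lam_mem k hk1 hkm g
    have hcard : (k : ℕ) ≤ (Finset.univ.filter (fun i : Fin (n + 1) => g i ≤ ConformalAux.Lam k g)).card := hmem
    have hsum : ∑ i : Fin (n + 1), (B i).indicator (fun _ => (1 : ℝ≥0∞)) g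
        = ((Finset.univ.filter (fun i : Fin (n + 1) => g i ≤ ConformalAux.Lam k g)).card : ℝ≥0∞) := by
      rw [Finset.card_filter]
      push_cast
      apply Finset.sum_congr rfl
      intro i _
      simp [Set.indicator_apply, hB, Set.mem_setOf_eq]
    rw [hsum]
    exact_mod_cast Nat.cast_le.mpr hcard
  -- integrate
  have hsumμ : (k : ℝ≥0∞) ≤ ∑ i : Fin (n + 1), μ (B i) := by
    have h1 : ∑ i : Fin (n + 1), μ (B i)
        = ∫⁻ g, ∑ i : Fin (n + 1), (B i).indicator (fun _ => (1 : ℝ≥0∞)) g ∂μ := by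
      rw [MeasureTheory.lintegral_finset_sum]
      · apply Finset.sum_congr rfl
        intro i _
        exact (MeasureTheory.lintegral_indicator_one (hBmeas i)).symm
      · intro i _
        exact (measurable_const.indicator (hBmeas i))
    rw [h1]
    calc (k : ℝ≥0∞) = ∫⁻ _, (k : ℝ≥0∞) ∂μ := by simp [lintegral_const]
      _ ≤ _ := lintegral_mono (fun g => hpoint g)
  have hsum_const : ∑ i : Fin (n + 1), μ (B i) = (n + 1 : ℝ≥0∞) * μ (B (Fin.last n)) := by
    rw [Finset.sum_congr rfl (fun i _ => hμBi i)]
    simp [Finset.sum_const, Finset.card_univ, mul_comm]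
  have hkey : (k : ℝ≥0∞) ≤ (n + 1 : ℝ≥0∞) * μ (B (Fin.last n)) := by
    rw [← hsum_const]; exact hsumμ
  -- numeric conclusion
  have hceil_ge : ENNReal.ofReal ((1 - α) * ((n : ℝ) + 1)) ≤ (k : ℝ≥0∞) := by
    rw [hk]
    calc ENNReal.ofReal ((1 - α) * ((n : ℝ) + 1))
        ≤ ENNReal.ofReal ((⌈(1 - α) * ((n : ℝ) + 1)⌉₊ : ℝ)) :=
          ENNReal.ofReal_le_ofReal (Nat.le_ceil _)
      _ = (⌈(1 - α) * ((n : ℝ) + 1)⌉₊ : ℝ≥0∞) := ENNReal.ofReal_natCast _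
  have hmulsplit : ENNReal.ofReal ((1 - α) * ((n : ℝ) + 1))
      = ENNReal.ofReal (1 - α) * (n + 1 : ℝ≥0∞) := by
    rw [ENNReal.ofReal_mul (le_of_lt hα1)]
    congr 1
    rw [show ((n : ℝ) + 1) = ((n + 1 : ℕ) : ℝ) by push_cast; ring]
    rw [ENNReal.ofReal_natCast]
    push_cast
    ring
  have hfinal : ENNReal.ofReal (1 - α) * (n + 1 : ℝ≥0∞)
      ≤ (n + 1 : ℝ≥0∞) * μ (B (Fin.last n)) := by
    rw [← hmulsplit]; exact hceil_ge.trans hkey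
  have hn1 : (n + 1 : ℝ≥0∞) ≠ 0 := by simp
  have hn2 : (n + 1 : ℝ≥0∞) ≠ ⊤ := by
    simp [ENNReal.add_eq_top]
  have : ENNReal.ofReal (1 - α) ≤ μ (B (Fin.last n)) := by
    rw [mul_comm] at hfinal
    exact (ENNReal.mul_le_mul_iff_right hn1 hn2).mp hfinal
  rw [hset, ← Measure.map_apply hTmeas (hBmeas (Fin.last n))]
  exact this
end

section
/- Let V be a finite nonempty type, 𝒳 a measurable space, and let (X_i, Y_i), i = 1, …, n+1, be an exchangeable sequence of random pairs on a probability space (Ω, 𝓕, P), with X_i taking values in 𝒳 and Y_i : V → {0,1}. Let f : 𝒳 → (V → ℝ) be a fixed measurable score map. For each i define the calibration score τ_i = max_{v ∈ V : Y_i(v)=0} f(X_i)(v), with the convention that the maximum over the empty set is −∞ (taking scores in the extended reals). Given α₁ ∈ (0,1) with ⌈(1−α₁)(n+1)⌉ ≤ n, let λ_I(α₁) = inf{λ ∈ ℝ : #{i ∈ {1,…,n} : τ_i ≤ λ} ≥ ⌈(1−α₁)(n+1)⌉} and define the inner set I(X) = {v ∈ V : f(X)(v) > λ_I(α₁)}.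 Then P( I(X_{n+1}) ⊆ {v ∈ V : Y_{n+1}(v) = 1} ) ≥ 1 − α₁. -/
open MeasureTheory
open scoped ENNReal

open scoped Classical in
lemma count_rank_aux {m k : ℕ} (hk : k ≤ m) (t : Fin m → EReal) :
    k ≤ (Finset.univ.filter
      (fun j => (Finset.univ.filter (fun i => t i < t j)).card < k)).card := by
  set B := Finset.univ.filter
      (fun j => (Finset.univ.filter (fun i => t i < t j)).card < k) with hB
  by_cases hC : (Finset.univ \ B).Nonempty
  · obtain ⟨j₀, hj₀, hmin⟩ := Finset.exists_min_image (Finset.univ \ B) t hC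
    have hj₀B : ¬ ((Finset.univ.filter (fun i => t i < t j₀)).card < k) := by
      simp only [hB, Finset.mem_sdiff, Finset.mem_filter, Finset.mem_univ, true_and] at hj₀
      exact hj₀
    have hsub : (Finset.univ.filter (fun i => t i < t j₀)) ⊆ B := by
      intro i hi
      simp only [Finset.mem_filter, Finset.mem_univ, true_and] at hi
      by_contra hiB
      have : i ∈ Finset.univ \ B := by simp [hiB]
      exact absurd (hmin i this) (not_le.mpr hi)
    calc k ≤ (Finset.univ.filter (fun i => t i < t j₀)).card := not_lt.mp hj₀B
    _ ≤ B.card := Finset.card_le_card hsub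
  · have : B = Finset.univ := by
      rw [Finset.not_nonempty_iff_eq_empty, Finset.sdiff_eq_empty_iff_subset] at hC
      exact Finset.eq_univ_of_forall (fun x => hC (Finset.mem_univ x))
    rw [this]
    simpa using hk


open scoped Classical in
/-- Marginal inner conformal confidence set theorem (maximum combination function):
with probability at least `1 - α₁`, the inner set `I(X_{n+1})` is contained in the
true mask `{v | Y_{n+1}(v) = 1}`. -/
theorem marginal_inner_set
    {Ω : Type*} [MeasurableSpace Ω] (P : Measure Ω) [IsProbabilityMeasure P]
    {V : Type*} [Fintype V] [Nonempty V]
    {𝓧 : Type*} [MeasurableSpace 𝓧]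
    (n : ℕ) (X : Fin (n + 1) → Ω → 𝓧) (Y : Fin (n + 1) → Ω → V → Bool)
    (hX : ∀ i, Measurable (X i)) (hY : ∀ i, Measurable (Y i))
    (hexch : ∀ σ : Equiv.Perm (Fin (n + 1)),
      Measure.map (fun ω => fun i => (X (σ i) ω, Y (σ i) ω)) P =
        Measure.map (fun ω => fun i => (X i ω, Y i ω)) P)
    (f : 𝓧 → V → ℝ) (hf : Measurable f)
    (τ : Fin (n + 1) → Ω → EReal)
    (hτ : ∀ i ω, τ i ω =
      sSup ((fun v => ((f (X i ω) v : ℝ) : EReal)) '' {v | Y i ω v = false}))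
    (α₁ : ℝ) (hα₁ : α₁ ∈ Set.Ioo (0 : ℝ) 1)
    (hceil : ⌈(1 - α₁) * ((n : ℝ) + 1)⌉₊ ≤ n)
    (lam : Ω → ℝ)
    (hlam : ∀ ω, lam ω = sInf {l : ℝ | ⌈(1 - α₁) * ((n : ℝ) + 1)⌉₊ ≤
      (Finset.univ.filter (fun i : Fin n => τ i.castSucc ω ≤ (l : EReal))).card}) :
    ENNReal.ofReal (1 - α₁) ≤
      P {ω | {v | lam ω < f (X (Fin.last n) ω) v} ⊆ {v | Y (Fin.last n) ω v = true}} := by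
  set k := ⌈(1 - α₁) * ((n : ℝ) + 1)⌉₊ with hkdef
  -- the score function on pairs
  set g : 𝓧 × (V → Bool) → EReal :=
    fun p => sSup ((fun v => ((f p.1 v : ℝ) : EReal)) '' {v | p.2 v = false}) with hgdef
  have hτg : ∀ i ω, τ i ω = g (X i ω, Y i ω) := fun i ω => hτ i ω
  -- g as a finite iSup
  have hg_iSup : ∀ p, g p = ⨆ v : V, if p.2 v = false then ((f p.1 v : ℝ) : EReal) else ⊥ := by
    intro p
    apply le_antisymm
    · apply sSup_le
      rintro x ⟨v, hv, rfl⟩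
      refine le_trans ?_ (le_iSup _ v)
      simp [Set.mem_setOf_eq.mp hv]
    · apply iSup_le
      intro v
      by_cases hv : p.2 v = false
      · simp only [hv, if_true]
        exact le_sSup ⟨v, hv, rfl⟩
      · simp [hv]
  have hgmeas : Measurable g := by
    have : Measurable (fun p : 𝓧 × (V → Bool) =>
        ⨆ v : V, if p.2 v = false then ((f p.1 v : ℝ) : EReal) else ⊥) := by
      apply Measurable.iSup
      intro v
      apply Measurable.ite
      · have hm : Measurable (fun p : 𝓧 × (V → Bool) => p.2 v) :=
          (measurable_pi_apply v).comp measurable_snd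
        exact hm (measurableSet_singleton false)
      · exact measurable_coe_real_ereal.comp
          ((measurable_pi_apply v).comp (hf.comp measurable_fst))
      · exact measurable_const
    convert this using 1
    ext p
    exact hg_iSup p
  -- the data map
  set T : Ω → (Fin (n + 1) → 𝓧 × (V → Bool)) := fun ω i => (X i ω, Y i ω) with hTdef
  have hTmeas : Measurable T :=
    measurable_pi_lambda _ (fun i => (hX i).prodMk (hY i))
  -- events
  set S : Fin (n + 1) → Set (Fin (n + 1) → 𝓧 × (V → Bool)) := fun j =>
    {t | (Finset.univ.filter (fun i => g (t i) < g (t j))).card < k} with hSdef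
  have hSmeas : ∀ j, MeasurableSet (S j) := by
    intro j
    have hc : Measurable (fun t : Fin (n + 1) → 𝓧 × (V → Bool) =>
        (Finset.univ.filter (fun i => g (t i) < g (t j))).card) := by
      simp only [Finset.card_filter]
      apply Finset.measurable_sum
      intro i _
      apply Measurable.ite _ measurable_const measurable_const
      exact measurableSet_lt (hgmeas.comp (measurable_pi_apply i))
        (hgmeas.comp (measurable_pi_apply j))
    exact hc (measurableSet_Iio (a := k))
  set A : Fin (n + 1) → Set Ω := fun j =>
    {ω | (Finset.univ.filter (fun i => τ i ω < τ j ω)).card < k} with hAdef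
  have hApre : ∀ j, A j = T ⁻¹' (S j) := by
    intro j
    ext ω
    simp only [hAdef, hSdef, Set.mem_setOf_eq, Set.mem_preimage, hτg, hTdef]
  have hAmeas : ∀ j, MeasurableSet (A j) := fun j => (hApre j ▸ hTmeas (hSmeas j))
  -- exchangeability: all A j have the same probability
  have hAeq : ∀ j, P (A j) = P (A (Fin.last n)) := by
    intro j
    set σ : Equiv.Perm (Fin (n + 1)) := Equiv.swap j (Fin.last n) with hσ
    have hcomp : ∀ ω, (fun i => T ω (σ i)) ∈ S (Fin.last n) ↔ T ω ∈ S j := by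
      intro ω
      simp only [hSdef, Set.mem_setOf_eq]
      have hlastσ : σ (Fin.last n) = j := Equiv.swap_apply_right j (Fin.last n)
      simp only [hlastσ]
      have : (Finset.univ.filter (fun i => g (T ω (σ i)) < g (T ω j))).card
          = (Finset.univ.filter (fun i => g (T ω i) < g (T ω j))).card := by
        apply Finset.card_bij (fun i _ => σ i)
        · intro a ha
          simp only [Finset.mem_filter, Finset.mem_univ, true_and] at ha ⊢
          exact ha
        · intro a _ b _ hab
          exact σ.injective hab
        · intro b hb
          refine ⟨σ.symm b, ?_, by simp⟩
          simp only [Finset.mem_filter, Finset.mem_univ, true_and] at hb ⊢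
          simpa using hb
      rw [this]
    have h1 : A j = (fun ω => fun i => (X (σ i) ω, Y (σ i) ω)) ⁻¹' (S (Fin.last n)) := by
      rw [hApre j]
      ext ω
      simp only [Set.mem_preimage]
      exact (hcomp ω).symm
    have hFσ : Measurable (fun ω => fun i => (X (σ i) ω, Y (σ i) ω)) :=
      measurable_pi_lambda _ (fun i => (hX (σ i)).prodMk (hY (σ i)))
    rw [h1, hApre (Fin.last n)]
    have := hexch σ
    calc P ((fun ω => fun i => (X (σ i) ω, Y (σ i) ω)) ⁻¹' S (Fin.last n))
        = Measure.map (fun ω => fun i => (X (σ i) ω, Y (σ i) ω)) P (S (Fin.last n)) :=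
          (Measure.map_apply hFσ (hSmeas _)).symm
      _ = Measure.map T P (S (Fin.last n)) := by rw [this]
      _ = P (T ⁻¹' S (Fin.last n)) := Measure.map_apply hTmeas (hSmeas _)
  -- pointwise counting bound
  have hk_le : k ≤ n + 1 := le_trans hceil (Nat.le_succ n)
  have hpoint : ∀ ω, (k : ℝ≥0∞) ≤ ∑ j : Fin (n + 1), (A j).indicator (fun _ => 1) ω := by
    intro ω
    have := count_rank_aux hk_le (fun i => τ i ω)
    calc (k : ℝ≥0∞) ≤ ((Finset.univ.filter (fun j : Fin (n + 1) =>
          (Finset.univ.filter (fun i => τ i ω < τ j ω)).card < k)).card : ℝ≥0∞) := by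
          exact_mod_cast this
      _ = ∑ j : Fin (n + 1), (A j).indicator (fun _ => 1) ω := by
          rw [Finset.card_filter]
          push_cast
          apply Finset.sum_congr rfl
          intro j _
          by_cases hj : ω ∈ A j
          · simp only [Set.indicator_of_mem hj]
            simp only [hAdef, Set.mem_setOf_eq] at hj
            simp [hj]
          · simp only [Set.indicator_of_notMem hj]
            simp only [hAdef, Set.mem_setOf_eq] at hj
            simp [hj]
  -- integrate
  have hsum : (k : ℝ≥0∞) ≤ ∑ j : Fin (n + 1), P (A j) := by
    have h1 : ∑ j : Fin (n + 1), P (A j)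
        = ∫⁻ ω, ∑ j : Fin (n + 1), (A j).indicator (fun _ => (1 : ℝ≥0∞)) ω ∂P := by
      rw [lintegral_finset_sum]
      · congr 1
        ext j
        rw [lintegral_indicator (hAmeas j)]
        simp
      · intro j _
        exact (measurable_const.indicator (hAmeas j))
    rw [h1]
    calc (k : ℝ≥0∞) = ∫⁻ _, (k : ℝ≥0∞) ∂P := by simp
      _ ≤ _ := lintegral_mono (fun ω => hpoint ω)
  have hlastP : (k : ℝ≥0∞) ≤ (n + 1) * P (A (Fin.last n)) := by
    calc (k : ℝ≥0∞) ≤ ∑ j : Fin (n + 1), P (A j) := hsum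
      _ = ∑ _j : Fin (n + 1), P (A (Fin.last n)) := by
          exact Finset.sum_congr rfl (fun j _ => hAeq j)
      _ = (n + 1) * P (A (Fin.last n)) := by
          rw [Finset.sum_const, Finset.card_univ, Fintype.card_fin, nsmul_eq_mul]
          push_cast
          ring
  -- probability bound
  have hprob : ENNReal.ofReal (1 - α₁) ≤ P (A (Fin.last n)) := by
    have hn1 : ((n : ℝ≥0∞) + 1) ≠ 0 := by simp [add_eq_zero]
    have hn1' : ((n : ℝ≥0∞) + 1) ≠ ⊤ := by
      simp [ENNReal.add_ne_top]
    rw [← ENNReal.mul_le_mul_iff_left hn1 hn1']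
    calc ENNReal.ofReal (1 - α₁) * ((n : ℝ≥0∞) + 1)
        = ENNReal.ofReal ((1 - α₁) * ((n : ℝ) + 1)) := by
          rw [ENNReal.ofReal_mul (by linarith [hα₁.2])]
          congr 1
          rw [ENNReal.ofReal_add (by positivity) zero_le_one]
          simp [ENNReal.ofReal_natCast]
      _ ≤ (k : ℝ≥0∞) := by
          rw [← ENNReal.ofReal_natCast k]
          exact ENNReal.ofReal_le_ofReal (Nat.le_ceil _)
      _ ≤ (n + 1) * P (A (Fin.last n)) := hlastP
      _ = P (A (Fin.last n)) * ((n : ℝ≥0∞) + 1) := by ring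
  -- inclusion of events
  have hincl : A (Fin.last n) ⊆
      {ω | {v | lam ω < f (X (Fin.last n) ω) v} ⊆ {v | Y (Fin.last n) ω v = true}} := by
    intro ω hω
    simp only [hAdef, Set.mem_setOf_eq] at hω
    -- count over Fin n
    have hcount : (Finset.univ.filter
        (fun i : Fin n => τ i.castSucc ω < τ (Fin.last n) ω)).card < k := by
      refine lt_of_le_of_lt ?_ hω
      apply Finset.card_le_card_of_injOn (fun i => i.castSucc)
      · intro i hi
        simp only [Finset.coe_filter, Set.mem_setOf_eq, Finset.mem_filter, Finset.mem_univ, true_and] at hi ⊢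
        exact hi
      · intro a _ b _ hab
        exact Fin.castSucc_injective n hab
    -- an upper bound on all scores
    obtain ⟨M, hM⟩ : ∃ M : ℝ, ∀ i, τ i ω ≤ (M : EReal) := by
      refine ⟨Finset.univ.sup' Finset.univ_nonempty
        (fun i : Fin (n + 1) => Finset.univ.sup' Finset.univ_nonempty (f (X i ω))), ?_⟩
      intro i
      rw [hτ]
      apply sSup_le
      rintro x ⟨v, _, rfl⟩
      have h1 : f (X i ω) v ≤ Finset.univ.sup' Finset.univ_nonempty (f (X i ω)) :=
        Finset.le_sup' _ (Finset.mem_univ v)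
      have h2 : Finset.univ.sup' Finset.univ_nonempty (f (X i ω)) ≤
          Finset.univ.sup' Finset.univ_nonempty
            (fun i : Fin (n + 1) => Finset.univ.sup' Finset.univ_nonempty (f (X i ω))) :=
        Finset.le_sup' (fun i : Fin (n + 1) =>
          Finset.univ.sup' Finset.univ_nonempty (f (X i ω))) (Finset.mem_univ i)
      exact EReal.coe_le_coe_iff.mpr (le_trans h1 h2)
    -- the quantile set is nonempty
    set Q : Set ℝ := {l : ℝ | k ≤
      (Finset.univ.filter (fun i : Fin n => τ i.castSucc ω ≤ (l : EReal))).card} with hQdef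
    have hQne : Q.Nonempty := by
      refine ⟨M, ?_⟩
      simp only [hQdef, Set.mem_setOf_eq]
      have : (Finset.univ.filter (fun i : Fin n => τ i.castSucc ω ≤ (M : EReal))) =
          Finset.univ := Finset.filter_true_of_mem (fun i _ => hM i.castSucc)
      rw [this]
      simpa using hceil
    -- τ_last ≤ lam
    have hkey : τ (Fin.last n) ω ≤ ((lam ω : ℝ) : EReal) := by
      rcases eq_bot_or_bot_lt (τ (Fin.last n) ω) with hbot | hbot
      · rw [hbot]; exact bot_le
      · -- τ_last is a real number
        have hne_top : τ (Fin.last n) ω ≠ ⊤ :=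
          ne_top_of_le_ne_top (EReal.coe_ne_top M) (hM (Fin.last n))
        obtain ⟨r, hr⟩ : ∃ r : ℝ, τ (Fin.last n) ω = (r : EReal) :=
          ⟨(τ (Fin.last n) ω).toReal, (EReal.coe_toReal hne_top hbot.ne').symm⟩
        rw [hr] at hcount ⊢
        rw [EReal.coe_le_coe_iff, hlam ω]
        apply le_csInf hQne
        intro l hl
        replace hl : k ≤ (Finset.univ.filter
          (fun i : Fin n => τ i.castSucc ω ≤ (l : EReal))).card := hl
        by_contra hlt
        push_neg at hlt
        have hsub : (Finset.univ.filter (fun i : Fin n => τ i.castSucc ω ≤ (l : EReal))) ⊆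
            (Finset.univ.filter (fun i : Fin n => τ i.castSucc ω < (r : EReal))) := by
          intro i hi
          simp only [Finset.mem_filter, Finset.mem_univ, true_and] at hi ⊢
          calc τ i.castSucc ω ≤ (l : EReal) := hi
            _ < (r : EReal) := by exact_mod_cast hlt
        have := Finset.card_le_card hsub
        omega
    -- conclude the inclusion
    intro v hv
    simp only [Set.mem_setOf_eq] at hv ⊢
    by_contra hfalse
    have hvfalse : Y (Fin.last n) ω v = false := by
      cases h : Y (Fin.last n) ω v
      · rfl
      · exact absurd h hfalse
    have hle : ((f (X (Fin.last n) ω) v : ℝ) : EReal) ≤ τ (Fin.last n) ω := by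
      rw [hτ]
      exact le_sSup ⟨v, hvfalse, rfl⟩
    have : ((f (X (Fin.last n) ω) v : ℝ) : EReal) ≤ ((lam ω : ℝ) : EReal) :=
      le_trans hle hkey
    rw [EReal.coe_le_coe_iff] at this
    linarith
  exact le_trans hprob (measure_mono hincl)
end

section
/- Let V be a finite nonempty type, 𝒳 a measurable space, and let (X_i, Y_i), i = 1, …, n+1, be an exchangeable sequence of random pairs on a probability space (Ω, 𝓕, P), with X_i taking values in 𝒳 and Y_i : V → {0,1}. Let f_O : 𝒳 → (V → ℝ) be a fixed measurable score map. For each i define the calibration score τ_i = max_{v ∈ V : Y_i(v)=1} (−f_O(X_i)(v)), with the convention that the maximum over the empty set is −∞ (taking scores in the extended reals). Given α₂ ∈ (0,1) with ⌈(1−α₂)(n+1)⌉ ≤ n, let λ_O(α₂) = inf{λ ∈ ℝ : #{i ∈ {1,…,n} : τ_i ≤ λ} ≥ ⌈(1−α₂)(n+1)⌉} and define the outer set O(X) = {v ∈ V : −f_O(X)(v) ≤ λ_O(α₂)}. Then P( {v ∈ V : Y_{n+1}(v) = 1} ⊆ O(X_{n+1}) ) ≥ 1 − α₂. -/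
open MeasureTheory

open scoped Classical

lemma mos_sSup_eq {V : Type*} (f : V → EReal) (s : Set V) :
    sSup (f '' s) = ⨆ v, if v ∈ s then f v else ⊥ := by
  rw [sSup_image]
  refine le_antisymm ?_ ?_
  · exact iSup₂_le fun v hv => le_iSup_of_le v (by simp [hv])
  · refine iSup_le fun v => ?_
    by_cases h : v ∈ s
    · simp only [h, if_true]; exact le_iSup₂ (f := fun v (_ : v ∈ s) => f v) v h
    · simp [h]

lemma mos_card_filter_perm {ι : Type*} [Fintype ι] (σ : Equiv.Perm ι) (Q : ι → Prop)
    [DecidablePred Q] :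
    (Finset.univ.filter (fun i => Q (σ i))).card = (Finset.univ.filter Q).card := by
  apply Finset.card_bij' (fun i _ => σ i) (fun i _ => σ.symm i) <;> simp

lemma mos_rank {m k : ℕ} (hk : k ≤ m) (g : Fin m → EReal) :
    k ≤ (Finset.univ.filter
      (fun j => (Finset.univ.filter (fun i => g i < g j)).card < k)).card := by
  by_contra h
  push_neg at h
  set T := Finset.univ.filter
    (fun j : Fin m => (Finset.univ.filter (fun i => g i < g j)).card < k) with hT
  have hTc : (Finset.univ \ T).Nonempty := by
    rw [Finset.sdiff_nonempty]
    intro hsub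
    have := Finset.card_le_card hsub
    simp only [Finset.card_univ, Fintype.card_fin] at this
    omega
  obtain ⟨j₀, hj₀, hmin⟩ := Finset.exists_min_image (Finset.univ \ T) g hTc
  have hnot : ¬ ((Finset.univ.filter (fun i => g i < g j₀)).card < k) := by
    have := (Finset.mem_sdiff.mp hj₀).2
    simpa [hT] using this
  apply hnot
  calc (Finset.univ.filter (fun i => g i < g j₀)).card ≤ T.card := by
        apply Finset.card_le_card
        intro i hi
        simp only [Finset.mem_filter] at hi
        by_contra hiT
        have hmem : i ∈ Finset.univ \ T := Finset.mem_sdiff.mpr ⟨Finset.mem_univ i, hiT⟩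
        exact absurd hi.2 (not_lt.mpr (hmin i hmem))
    _ < k := h

open scoped Classical in
/-- Marginal outer conformal confidence set theorem (maximum combination function):
with probability at least `1 - α₂`, the true mask `{v | Y_{n+1}(v) = 1}` is contained
in the outer set `O(X_{n+1})`. -/
theorem marginal_outer_set
    {Ω : Type*} [MeasurableSpace Ω] (P : Measure Ω) [IsProbabilityMeasure P]
    {V : Type*} [Fintype V] [Nonempty V]
    {𝓧 : Type*} [MeasurableSpace 𝓧]
    (n : ℕ) (X : Fin (n + 1) → Ω → 𝓧) (Y : Fin (n + 1) → Ω → V → Bool)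
    (hX : ∀ i, Measurable (X i)) (hY : ∀ i, Measurable (Y i))
    (hexch : ∀ σ : Equiv.Perm (Fin (n + 1)),
      Measure.map (fun ω => fun i => (X (σ i) ω, Y (σ i) ω)) P =
        Measure.map (fun ω => fun i => (X i ω, Y i ω)) P)
    (fO : 𝓧 → V → ℝ) (hfO : Measurable fO)
    (τ : Fin (n + 1) → Ω → EReal)
    (hτ : ∀ i ω, τ i ω =
      sSup ((fun v => ((-(fO (X i ω) v) : ℝ) : EReal)) '' {v | Y i ω v = true}))
    (α₂ : ℝ) (hα₂ : α₂ ∈ Set.Ioo (0 : ℝ) 1)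
    (hceil : ⌈(1 - α₂) * ((n : ℝ) + 1)⌉₊ ≤ n)
    (lam : Ω → ℝ)
    (hlam : ∀ ω, lam ω = sInf {l : ℝ | ⌈(1 - α₂) * ((n : ℝ) + 1)⌉₊ ≤
      (Finset.univ.filter (fun i : Fin n => τ i.castSucc ω ≤ (l : EReal))).card}) :
    ENNReal.ofReal (1 - α₂) ≤
      P {ω | {v | Y (Fin.last n) ω v = true} ⊆
        {v | -(fO (X (Fin.last n) ω) v) ≤ lam ω}} := by
  obtain ⟨hα0, hα1⟩ := hα₂
  set k := ⌈(1 - α₂) * ((n : ℝ) + 1)⌉₊ with hkdef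
  -- the canonical score function
  set G : 𝓧 × (V → Bool) → EReal :=
    fun p => ⨆ v, if p.2 v = true then ((-(fO p.1 v) : ℝ) : EReal) else ⊥ with hGdef
  have hτG : ∀ i ω, τ i ω = G (X i ω, Y i ω) := by
    intro i ω
    rw [hτ, mos_sSup_eq]
    simp only [hGdef, Set.mem_setOf_eq]
  have hGmeas : Measurable G := by
    apply Measurable.iSup
    intro v
    refine Measurable.ite ?_ ?_ measurable_const
    · have hm : Measurable fun p : 𝓧 × (V → Bool) => p.2 v :=
        (measurable_pi_apply v).comp measurable_snd
      exact hm (measurableSet_singleton true)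
    · exact measurable_coe_real_ereal.comp
        (((measurable_pi_apply v).comp (hfO.comp measurable_fst)).neg)
  -- joint data map
  set Φ : Ω → (Fin (n + 1) → 𝓧 × (V → Bool)) := fun ω i => (X i ω, Y i ω) with hΦdef
  have hΦ : Measurable Φ := measurable_pi_lambda _ fun i => (hX i).prodMk (hY i)
  -- rank counts
  set N : Fin (n + 1) → (Fin (n + 1) → 𝓧 × (V → Bool)) → ℕ :=
    fun j z => (Finset.univ.filter (fun i => G (z i) < G (z j))).card with hNdef
  have hN : ∀ j, Measurable (N j) := by
    intro j
    have : N j = fun z => ∑ i : Fin (n + 1), if G (z i) < G (z j) then 1 else 0 := by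
      funext z; exact Finset.card_filter _ _
    rw [this]
    refine Finset.measurable_sum _ fun i _ => ?_
    refine Measurable.ite ?_ measurable_const measurable_const
    exact measurableSet_lt (hGmeas.comp (measurable_pi_apply i))
      (hGmeas.comp (measurable_pi_apply j))
  set E : Fin (n + 1) → Set (Fin (n + 1) → 𝓧 × (V → Bool)) :=
    fun j => {z | N j z < k} with hEdef
  have hE : ∀ j, MeasurableSet (E j) := by
    intro j
    have h : E j = N j ⁻¹' Set.Iio k := rfl
    rw [h]
    exact (hN j) MeasurableSet.of_discrete
  -- exchangeability: all ranks equally likely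
  have hswap : ∀ j, P (Φ ⁻¹' E j) = P (Φ ⁻¹' E (Fin.last n)) := by
    intro j
    set σ := Equiv.swap (Fin.last n) j with hσ
    have hσlast : σ (Fin.last n) = j := Equiv.swap_apply_left _ _
    have hΦσ : Measurable (fun ω => fun i => (X (σ i) ω, Y (σ i) ω)) :=
      measurable_pi_lambda _ fun i => (hX _).prodMk (hY _)
    have h1 : Φ ⁻¹' E j = (fun ω => fun i => (X (σ i) ω, Y (σ i) ω)) ⁻¹' E (Fin.last n) := by
      ext ω
      simp only [Set.mem_preimage, hEdef, Set.mem_setOf_eq, hNdef]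
      have h2 : (Finset.univ.filter
          (fun i => G (X (σ i) ω, Y (σ i) ω) <
            G (X (σ (Fin.last n)) ω, Y (σ (Fin.last n)) ω))).card =
          (Finset.univ.filter (fun i => G (Φ ω i) < G (Φ ω j))).card := by
        rw [hσlast]
        exact mos_card_filter_perm σ (fun i => G (Φ ω i) < G (Φ ω j))
      rw [h2]
    rw [h1, ← Measure.map_apply hΦσ (hE _), hexch σ, Measure.map_apply hΦ (hE _)]
  -- sum of probabilities bounded below by k
  have hkn1 : k ≤ n + 1 := le_trans hceil (Nat.le_succ n)
  have hsum : (k : ENNReal) ≤ ∑ j : Fin (n + 1), P (Φ ⁻¹' E j) := by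
    have hpt : ∀ ω, (k : ENNReal) ≤
        ∑ j : Fin (n + 1), (Φ ⁻¹' E j).indicator (fun _ => (1 : ENNReal)) ω := by
      intro ω
      have h := mos_rank hkn1 (fun i => G (Φ ω i)) (k := k)
      have heq : ∑ j : Fin (n + 1), (Φ ⁻¹' E j).indicator (fun _ => (1 : ENNReal)) ω =
          ((Finset.univ.filter (fun j : Fin (n + 1) =>
            (Finset.univ.filter (fun i => G (Φ ω i) < G (Φ ω j))).card < k)).card : ENNReal) := by
        rw [Finset.card_filter, Nat.cast_sum]
        refine Finset.sum_congr rfl fun j _ => ?_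
        by_cases hj : N j (Φ ω) < k
        · simp [Set.indicator_apply, hEdef, hNdef, hj]
        · simp [Set.indicator_apply, hEdef, hNdef, hj]
      rw [heq]
      exact_mod_cast Nat.cast_le.mpr h
    calc (k : ENNReal) = ∫⁻ _, (k : ENNReal) ∂P := by
          simp [lintegral_const]
      _ ≤ ∫⁻ ω, ∑ j : Fin (n + 1), (Φ ⁻¹' E j).indicator (fun _ => (1 : ENNReal)) ω ∂P :=
          lintegral_mono hpt
      _ = ∑ j : Fin (n + 1), ∫⁻ ω, (Φ ⁻¹' E j).indicator (fun _ => (1 : ENNReal)) ω ∂P := by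
          refine lintegral_finset_sum _ fun j _ => ?_
          exact measurable_const.indicator (hΦ (hE j))
      _ = ∑ j : Fin (n + 1), P (Φ ⁻¹' E j) := by
          refine Finset.sum_congr rfl fun j _ => ?_
          exact lintegral_indicator_one (hΦ (hE j))
  have heqsum : ∑ j : Fin (n + 1), P (Φ ⁻¹' E j) = (n + 1) * P (Φ ⁻¹' E (Fin.last n)) := by
    rw [Finset.sum_congr rfl fun j _ => hswap j]
    simp [Finset.sum_const, mul_comm]
  -- coverage lower bound for the abstract event
  have hp : ENNReal.ofReal (1 - α₂) ≤ P (Φ ⁻¹' E (Fin.last n)) := by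
    have h1 : ENNReal.ofReal (1 - α₂) * (n + 1) ≤ (k : ENNReal) := by
      have h2 : (1 - α₂) * ((n : ℝ) + 1) ≤ (k : ℝ) := Nat.le_ceil _
      calc ENNReal.ofReal (1 - α₂) * (n + 1)
          = ENNReal.ofReal ((1 - α₂) * ((n : ℝ) + 1)) := by
            rw [ENNReal.ofReal_mul (by linarith)]
            congr 1
            rw [show ((n : ℝ) + 1) = ((n + 1 : ℕ) : ℝ) by push_cast; ring,
              ENNReal.ofReal_natCast]
            push_cast; ring
        _ ≤ ENNReal.ofReal (k : ℝ) := ENNReal.ofReal_le_ofReal h2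
        _ = (k : ENNReal) := ENNReal.ofReal_natCast k
    have h2 : (k : ENNReal) ≤ (n + 1) * P (Φ ⁻¹' E (Fin.last n)) := heqsum ▸ hsum
    have h3 : ENNReal.ofReal (1 - α₂) * (n + 1) ≤ P (Φ ⁻¹' E (Fin.last n)) * (n + 1) := by
      calc ENNReal.ofReal (1 - α₂) * (n + 1) ≤ (k : ENNReal) := h1
        _ ≤ (n + 1) * P (Φ ⁻¹' E (Fin.last n)) := h2
        _ = P (Φ ⁻¹' E (Fin.last n)) * (n + 1) := mul_comm _ _
    exact (ENNReal.mul_le_mul_iff_left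
      (ne_of_gt (lt_of_lt_of_le zero_lt_one le_add_self))
      (ENNReal.add_ne_top.mpr ⟨ENNReal.natCast_ne_top n, ENNReal.one_ne_top⟩)).mp h3
  -- the abstract event implies the coverage event
  refine le_trans hp (measure_mono ?_)
  intro ω hω
  simp only [Set.mem_preimage, hEdef, Set.mem_setOf_eq, hNdef] at hω
  -- count over calibration indices
  have hcn : (Finset.univ.filter
      (fun i : Fin n => τ i.castSucc ω < τ (Fin.last n) ω)).card < k := by
    refine lt_of_le_of_lt ?_ hω
    refine Finset.card_le_card_of_injOn (fun i => i.castSucc) ?_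
      (Fin.castSucc_injective n).injOn
    intro i hi
    simp only [Finset.coe_filter, Finset.mem_filter, Finset.mem_univ, true_and, Set.mem_setOf_eq] at hi ⊢
    rw [hτG, hτG] at hi
    exact hi
  set S : Set ℝ := {l : ℝ | k ≤
    (Finset.univ.filter (fun i : Fin n => τ i.castSucc ω ≤ (l : EReal))).card} with hSdef
  have hSne : S.Nonempty := by
    refine ⟨∑ p : Fin n × V, |fO (X p.1.castSucc ω) p.2|, ?_⟩
    have hall : ∀ i : Fin n, τ i.castSucc ω ≤
        ((∑ p : Fin n × V, |fO (X p.1.castSucc ω) p.2| : ℝ) : EReal) := by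
      intro i
      rw [hτ]
      refine sSup_le ?_
      rintro a ⟨v, _, rfl⟩
      rw [EReal.coe_le_coe_iff]
      calc -(fO (X i.castSucc ω) v) ≤ |fO (X i.castSucc ω) v| := neg_le_abs _
        _ ≤ ∑ p : Fin n × V, |fO (X p.1.castSucc ω) p.2| :=
          Finset.single_le_sum (f := fun p : Fin n × V => |fO (X p.1.castSucc ω) p.2|)
            (fun p _ => abs_nonneg _) (Finset.mem_univ (i, v))
    have : (Finset.univ.filter (fun i : Fin n => τ i.castSucc ω ≤
        ((∑ p : Fin n × V, |fO (X p.1.castSucc ω) p.2| : ℝ) : EReal))) = Finset.univ := by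
      refine Finset.filter_true_of_mem fun i _ => hall i
    simp only [hSdef, Set.mem_setOf_eq, this, Finset.card_univ, Fintype.card_fin]
    exact hceil
  have hlb : ∀ l ∈ S, τ (Fin.last n) ω ≤ (l : EReal) := by
    intro l hl
    by_contra hc
    push_neg at hc
    have hsub : (Finset.univ.filter (fun i : Fin n => τ i.castSucc ω ≤ (l : EReal))) ⊆
        (Finset.univ.filter (fun i : Fin n => τ i.castSucc ω < τ (Fin.last n) ω)) := by
      intro i hi
      simp only [Finset.mem_filter, Finset.mem_univ, true_and] at hi ⊢
      exact lt_of_le_of_lt hi hc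
    have := Finset.card_le_card hsub
    have hk2 : k ≤ (Finset.univ.filter
        (fun i : Fin n => τ i.castSucc ω < τ (Fin.last n) ω)).card := le_trans hl this
    omega
  have hτlam : τ (Fin.last n) ω ≤ ((lam ω : ℝ) : EReal) := by
    rw [hlam]
    obtain ⟨l₀, hl₀⟩ := hSne
    rcases eq_or_ne (τ (Fin.last n) ω) ⊥ with hbot | hbot
    · rw [hbot]; exact bot_le
    · have htop : τ (Fin.last n) ω ≠ ⊤ :=
        ne_top_of_le_ne_top (EReal.coe_ne_top l₀) (hlb l₀ hl₀)
      rw [← EReal.coe_toReal htop hbot]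
      rw [EReal.coe_le_coe_iff]
      refine le_csInf ⟨l₀, hl₀⟩ fun l hl => ?_
      have := hlb l hl
      rw [← EReal.coe_toReal htop hbot, EReal.coe_le_coe_iff] at this
      exact this
  intro v hv
  simp only [Set.mem_setOf_eq] at hv ⊢
  have h1 : ((-(fO (X (Fin.last n) ω) v) : ℝ) : EReal) ≤ τ (Fin.last n) ω := by
    rw [hτ]
    exact le_sSup ⟨v, hv, rfl⟩
  exact EReal.coe_le_coe_iff.mp (le_trans h1 hτlam)
end

section
/- Let n ≥ 1, let τ_1, …, τ_n be real numbers and let α ∈ (0,1). Then the set {λ ∈ ℝ : (1/n) · #{i : τ_i > λ} ≤ α − (1−α)/n} equals the set {λ ∈ ℝ : (1/n) · #{i : τ_i ≤ λ} ≥ ⌈(1−α)(n+1)⌉ / n}; in particular the two infima coincide: inf{λ : (1/n)·#{i : τ_i > λ} ≤ α − (1−α)/n} = inf{λ : #{i : τ_i ≤ λ} ≥ ⌈(1−α)(n+1)⌉}. -/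
open scoped Classical in
/-- The risk-control threshold set at level `α - (1-α)/n` for the miscoverage loss
`1[τᵢ > λ]` coincides with the conformal quantile threshold set, and hence so do the
two infima. -/
theorem risk_control_threshold_eq_conformal
    (n : ℕ) (hn : 1 ≤ n) (τ : Fin n → ℝ) (α : ℝ) (hα : α ∈ Set.Ioo (0 : ℝ) 1) :
    ({l : ℝ | ((Finset.univ.filter fun i : Fin n => l < τ i).card : ℝ) / n ≤
        α - (1 - α) / n} =
      {l : ℝ | ((⌈(1 - α) * ((n : ℝ) + 1)⌉₊ : ℝ)) / n ≤
        ((Finset.univ.filter fun i : Fin n => τ i ≤ l).card : ℝ) / n}) ∧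
    (sInf {l : ℝ | ((Finset.univ.filter fun i : Fin n => l < τ i).card : ℝ) / n ≤
        α - (1 - α) / n} =
      sInf {l : ℝ | ⌈(1 - α) * ((n : ℝ) + 1)⌉₊ ≤
        (Finset.univ.filter fun i : Fin n => τ i ≤ l).card}) := by
  have hn0 : (0 : ℝ) < n := by exact_mod_cast hn
  have key : ∀ l : ℝ,
      ((Finset.univ.filter fun i : Fin n => l < τ i).card : ℝ) / n ≤ α - (1 - α) / n ↔
      ⌈(1 - α) * ((n : ℝ) + 1)⌉₊ ≤ (Finset.univ.filter fun i : Fin n => τ i ≤ l).card := by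
    intro l
    set k := (Finset.univ.filter fun i : Fin n => τ i ≤ l).card with hk
    have hcompl : (Finset.univ.filter fun i : Fin n => l < τ i).card = n - k := by
      have := Finset.card_filter_add_card_filter_not
        (s := (Finset.univ : Finset (Fin n))) (p := fun i : Fin n => τ i ≤ l)
      simp only [not_le, Finset.card_univ, Fintype.card_fin] at this
      omega
    have hkn : k ≤ n := by
      have := Finset.card_filter_le (Finset.univ : Finset (Fin n))
        (fun i : Fin n => τ i ≤ l)
      simpa using this
    rw [hcompl]
    rw [Nat.ceil_le]
    have hcast : ((n - k : ℕ) : ℝ) = (n : ℝ) - k := by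
      push_cast [hkn]; ring
    rw [hcast]
    rw [div_le_iff₀ hn0, sub_div' hn0.ne', div_mul_eq_mul_div,
      le_div_iff₀ hn0] at *
    constructor
    · intro h; nlinarith
    · intro h; nlinarith
  constructor
  · ext l
    simp only [Set.mem_setOf_eq, key l, div_le_div_iff_of_pos_right hn0, Nat.cast_le]
  · congr 1
    ext l
    exact key l
end

section
/- Let V be a finite nonempty type, 𝒳 a measurable space, and let (X_i, Y_i), i = 1, …, n+1, be an exchangeable sequence of random pairs on a probability space (Ω, 𝓕, P), with X_i taking values in 𝒳 and Y_i : V → {0,1}. Let β : ({0,1})^V → 𝒫(V) be a fixed measurable map satisfying β(Y) ⊆ {v ∈ V : Y(v) = 1} for every mask Y, and set B_i = β(Y_i). Let b : 𝒳 → (V → ℝ) be a fixed measurable score map. For each i define τ_i = max_{v ∉ B_i} b(X_i)(v), with the convention that the maximum over the empty set is −∞. Given α₁ ∈ (0,1) with ⌈(1−α₁)(n+1)⌉ ≤ n, let λ_I(α₁) = inf{λ ∈ ℝ : #{i ∈ {1,…,n} : τ_i ≤ λ} ≥ ⌈(1−α₁)(n+1)⌉} and define I(X) = {v ∈ V : b(X)(v)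 > λ_I(α₁)}. Then P( I(X_{n+1}) ⊆ B_{n+1} ⊆ {v ∈ V : Y_{n+1}(v) = 1} ) ≥ 1 − α₁. -/
open MeasureTheory
open scoped ENNReal

open scoped Classical in
/-- At least `k` of the `n+1` indices have strict-rank `< k`. -/
lemma mibb_count_rank {n k : ℕ} (hk : k ≤ n + 1) (t : Fin (n + 1) → EReal) :
    k ≤ (Finset.univ.filter fun j =>
      (Finset.univ.filter fun i => t i < t j).card < k).card := by
  set σ := Tuple.sort t with hσ
  have hmono := Tuple.monotone_sort t
  have key : ∀ m : Fin (n + 1), (m : ℕ) < k →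
      (Finset.univ.filter fun i => t i < t (σ m)).card < k := by
    intro m hm
    have h1 : (Finset.univ.filter fun i => t i < t (σ m)).card
        = (Finset.univ.filter fun p : Fin (n + 1) => t (σ p) < t (σ m)).card := by
      apply Finset.card_equiv σ.symm
      intro i
      simp [Equiv.apply_symm_apply]
    have h2 : (Finset.univ.filter fun p : Fin (n + 1) => t (σ p) < t (σ m)).card
        ≤ (Finset.univ.filter fun p : Fin (n + 1) => p < m).card := by
      apply Finset.card_le_card
      intro p hp
      simp only [Finset.mem_filter, Finset.mem_univ, true_and] at hp ⊢
      by_contra hpm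
      exact absurd (hmono (not_lt.mp hpm)) (not_le.mpr hp)
    have h3 : (Finset.univ.filter fun p : Fin (n + 1) => p < m).card = (m : ℕ) := by
      have : (Finset.univ.filter fun p : Fin (n + 1) => p < m) = Finset.Iio m := by
        ext p; simp [Finset.mem_Iio]
      rw [this, Fin.card_Iio]
    omega
  have hinj : Function.Injective fun m : Fin k => σ (Fin.castLE hk m) := by
    intro a c h
    exact Fin.castLE_injective hk (σ.injective h)
  calc k = (Finset.univ : Finset (Fin k)).card := by simp
    _ ≤ _ := by
      apply Finset.card_le_card_of_injOn (fun m : Fin k => σ (Fin.castLE hk m))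
      · intro m _
        simp only [Finset.mem_coe, Finset.mem_filter, Finset.mem_univ, true_and]
        exact key (Fin.castLE hk m) (by simp)
      · exact hinj.injOn

open scoped Classical in
lemma mibb_measurable_G {V : Type*} [Fintype V] {𝓧 : Type*} [MeasurableSpace 𝓧]
    (β : (V → Bool) → Set V) (b : 𝓧 → V → ℝ) (hb : Measurable b) :
    Measurable (fun p : 𝓧 × (V → Bool) =>
      sSup ((fun v => ((b p.1 v : ℝ) : EReal)) '' (β p.2)ᶜ)) := by
  apply measurable_from_prod_countable_left
  intro y
  have h : (fun x : 𝓧 => sSup ((fun v => ((b x v : ℝ) : EReal)) '' (β y)ᶜ))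
      = fun x => ⨆ v ∈ (β y)ᶜ, ((b x v : ℝ) : EReal) := by
    funext x; rw [sSup_image]
  rw [h]
  apply Measurable.iSup
  intro v
  apply Measurable.iSup
  intro _
  exact measurable_coe_real_ereal.comp ((measurable_pi_apply v).comp hb)

lemma mibb_G_ne_top {V : Type*} [Fintype V] (f : V → ℝ) (S : Set V) :
    sSup ((fun v => ((f v : ℝ) : EReal)) '' S) ≠ ⊤ := by
  rcases S.eq_empty_or_nonempty with h | h
  · simp [h]
  · have hfin : ((fun v => ((f v : ℝ) : EReal)) '' S).Finite :=
      (S.toFinite).image _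
    obtain ⟨v, _, hv⟩ := Set.Nonempty.csSup_mem (h.image _) hfin
    rw [← hv]
    exact EReal.coe_ne_top _

open scoped Classical in
/-- Marginal inner bounding-box corollary: applying the inner conformal construction to
the derived sets `Bᵢ = β(Yᵢ)` (a fixed deterministic map of the mask, with
`β(Y) ⊆ {v | Y v = 1}`) gives `P(I(X_{n+1}) ⊆ B_{n+1} ⊆ {v | Y_{n+1} v = 1}) ≥ 1 - α₁`. -/
theorem marginal_inner_bounding_box
    {Ω : Type*} [MeasurableSpace Ω] (P : Measure Ω) [IsProbabilityMeasure P]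
    {V : Type*} [Fintype V] [Nonempty V]
    {𝓧 : Type*} [MeasurableSpace 𝓧]
    (n : ℕ) (X : Fin (n + 1) → Ω → 𝓧) (Y : Fin (n + 1) → Ω → V → Bool)
    (hX : ∀ i, Measurable (X i)) (hY : ∀ i, Measurable (Y i))
    (hexch : ∀ σ : Equiv.Perm (Fin (n + 1)),
      Measure.map (fun ω => fun i => (X (σ i) ω, Y (σ i) ω)) P =
        Measure.map (fun ω => fun i => (X i ω, Y i ω)) P)
    (β : (V → Bool) → Set V) (hβ : ∀ m : V → Bool, β m ⊆ {v | m v = true})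
    (b : 𝓧 → V → ℝ) (hb : Measurable b)
    (τ : Fin (n + 1) → Ω → EReal)
    (hτ : ∀ i ω, τ i ω =
      sSup ((fun v => ((b (X i ω) v : ℝ) : EReal)) '' (β (Y i ω))ᶜ))
    (α₁ : ℝ) (hα₁ : α₁ ∈ Set.Ioo (0 : ℝ) 1)
    (hceil : ⌈(1 - α₁) * ((n : ℝ) + 1)⌉₊ ≤ n)
    (lam : Ω → ℝ)
    (hlam : ∀ ω, lam ω = sInf {l : ℝ | ⌈(1 - α₁) * ((n : ℝ) + 1)⌉₊ ≤
      (Finset.univ.filter (fun i : Fin n => τ i.castSucc ω ≤ (l : EReal))).card}) :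
    ENNReal.ofReal (1 - α₁) ≤
      P {ω | {v | lam ω < b (X (Fin.last n) ω) v} ⊆ β (Y (Fin.last n) ω) ∧
        β (Y (Fin.last n) ω) ⊆ {v | Y (Fin.last n) ω v = true}} := by
  obtain ⟨hα0, hα1⟩ := hα₁
  set k := ⌈(1 - α₁) * ((n : ℝ) + 1)⌉₊ with hkdef
  have hkn : k ≤ n + 1 := le_trans hceil (Nat.le_succ n)
  set G : 𝓧 × (V → Bool) → EReal :=
    fun p => sSup ((fun v => ((b p.1 v : ℝ) : EReal)) '' (β p.2)ᶜ) with hGdef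
  have hGmeas : Measurable G := mibb_measurable_G β b hb
  have hτtop : ∀ i ω, τ i ω ≠ ⊤ := fun i ω => by
    rw [hτ i ω]; exact mibb_G_ne_top _ _
  set D : Ω → (Fin (n + 1) → 𝓧 × (V → Bool)) := fun ω i => (X i ω, Y i ω) with hDdef
  have hD : Measurable D := measurable_pi_lambda _ fun i => (hX i).prodMk (hY i)
  have hτG : ∀ i ω, τ i ω = G (D ω i) := fun i ω => hτ i ω
  set S : Fin (n + 1) → Set (Fin (n + 1) → 𝓧 × (V → Bool)) := fun j =>
    {z | (Finset.univ.filter fun i => G (z i) < G (z j)).card < k} with hSdef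
  have hSm : ∀ j, MeasurableSet (S j) := by
    intro j
    have hc : Measurable fun z : Fin (n + 1) → 𝓧 × (V → Bool) =>
        (Finset.univ.filter fun i => G (z i) < G (z j)).card := by
      have he : (fun z : Fin (n + 1) → 𝓧 × (V → Bool) =>
          (Finset.univ.filter fun i => G (z i) < G (z j)).card)
          = fun z => ∑ i : Fin (n + 1), if G (z i) < G (z j) then 1 else 0 := by
        funext z; exact Finset.card_filter _ _
      rw [he]
      apply Finset.measurable_sum
      intro i _
      exact Measurable.ite
        (measurableSet_lt (hGmeas.comp (measurable_pi_apply i))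
          (hGmeas.comp (measurable_pi_apply j))) measurable_const measurable_const
    have hpre : S j = (fun z : Fin (n + 1) → 𝓧 × (V → Bool) =>
        (Finset.univ.filter fun i => G (z i) < G (z j)).card) ⁻¹' (Set.Iio k) := rfl
    rw [hpre]
    exact hc MeasurableSet.of_discrete
  -- all indices have the same probability of small rank
  have hA_eq : ∀ j, P (D ⁻¹' S j) = P (D ⁻¹' S (Fin.last n)) := by
    intro j
    set σ := Equiv.swap j (Fin.last n) with hσdef
    have hperm : Measurable fun z : Fin (n + 1) → 𝓧 × (V → Bool) => z ∘ σ :=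
      measurable_pi_lambda _ fun i => measurable_pi_apply (σ i)
    have hSj : S j = (fun z : Fin (n + 1) → 𝓧 × (V → Bool) => z ∘ σ) ⁻¹' S (Fin.last n) := by
      ext z
      simp only [hSdef, Set.mem_preimage, Set.mem_setOf_eq, Function.comp_apply]
      have hcard : (Finset.univ.filter fun i => G (z (σ i)) < G (z (σ (Fin.last n)))).card
          = (Finset.univ.filter fun i => G (z i) < G (z j)).card := by
        rw [show σ (Fin.last n) = j from Equiv.swap_apply_right _ _]
        apply Finset.card_equiv σ
        intro i
        simp
      rw [hcard]
    have hmm : Measure.map (fun z : Fin (n + 1) → 𝓧 × (V → Bool) => z ∘ σ)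
        (Measure.map D P) = Measure.map D P := by
      rw [Measure.map_map hperm hD]
      have hcomp : ((fun z : Fin (n + 1) → 𝓧 × (V → Bool) => z ∘ σ) ∘ D)
          = fun ω => fun i => (X (σ i) ω, Y (σ i) ω) := rfl
      rw [hcomp, hexch σ]
    calc P (D ⁻¹' S j) = Measure.map D P (S j) := (Measure.map_apply hD (hSm j)).symm
      _ = Measure.map D P ((fun z => z ∘ σ) ⁻¹' S (Fin.last n)) := by rw [hSj]
      _ = Measure.map (fun z => z ∘ σ) (Measure.map D P) (S (Fin.last n)) :=
          (Measure.map_apply hperm (hSm _)).symm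
      _ = Measure.map D P (S (Fin.last n)) := by rw [hmm]
      _ = P (D ⁻¹' S (Fin.last n)) := Measure.map_apply hD (hSm _)
  -- lower bound on the probability via exchangeability
  have hsum : (k : ℝ≥0∞) ≤ ((n + 1 : ℕ) : ℝ≥0∞) * P (D ⁻¹' S (Fin.last n)) := by
    have hptwise : ∀ ω, (k : ℝ≥0∞) ≤
        ∑ j : Fin (n + 1), (D ⁻¹' S j).indicator (fun _ => (1 : ℝ≥0∞)) ω := by
      intro ω
      have hcount := mibb_count_rank hkn (fun j => G (D ω j))
      have hsum_eq : ∑ j : Fin (n + 1), (D ⁻¹' S j).indicator (fun _ => (1 : ℝ≥0∞)) ω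
          = ((Finset.univ.filter fun j =>
              (Finset.univ.filter fun i => G (D ω i) < G (D ω j)).card < k).card : ℝ≥0∞) := by
        rw [Finset.card_filter]
        push_cast
        apply Finset.sum_congr rfl
        intro j _
        by_cases hj : (Finset.univ.filter fun i => G (D ω i) < G (D ω j)).card < k
        · simp [Set.indicator_apply, hSdef, hj]
        · simp [Set.indicator_apply, hSdef, hj]
      rw [hsum_eq]
      exact_mod_cast hcount
    calc (k : ℝ≥0∞) = ∫⁻ _, (k : ℝ≥0∞) ∂P := by simp
      _ ≤ ∫⁻ ω, ∑ j : Fin (n + 1), (D ⁻¹' S j).indicator (fun _ => (1 : ℝ≥0∞)) ω ∂P :=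
          lintegral_mono hptwise
      _ = ∑ j : Fin (n + 1), ∫⁻ ω, (D ⁻¹' S j).indicator (fun _ => (1 : ℝ≥0∞)) ω ∂P :=
          lintegral_finset_sum _ fun j _ => measurable_const.indicator (hD (hSm j))
      _ = ∑ j : Fin (n + 1), P (D ⁻¹' S j) := by
          apply Finset.sum_congr rfl
          intro j _
          exact lintegral_indicator_one (hD (hSm j))
      _ = ((n + 1 : ℕ) : ℝ≥0∞) * P (D ⁻¹' S (Fin.last n)) := by
          rw [Finset.sum_congr rfl fun j _ => hA_eq j, Finset.sum_const, Finset.card_univ,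
            Fintype.card_fin, nsmul_eq_mul]
  -- the rank event is contained in the target event
  have hincl : D ⁻¹' S (Fin.last n) ⊆
      {ω | {v | lam ω < b (X (Fin.last n) ω) v} ⊆ β (Y (Fin.last n) ω) ∧
        β (Y (Fin.last n) ω) ⊆ {v | Y (Fin.last n) ω v = true}} := by
    intro ω hw
    simp only [Set.mem_preimage, hSdef, Set.mem_setOf_eq] at hw
    have hwτ : (Finset.univ.filter fun i : Fin (n + 1) =>
        τ i ω < τ (Fin.last n) ω).card < k := by
      have : (Finset.univ.filter fun i : Fin (n + 1) => τ i ω < τ (Fin.last n) ω)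
          = (Finset.univ.filter fun i => G (D ω i) < G (D ω (Fin.last n))) := by
        apply Finset.filter_congr
        intro i _
        rw [hτG i ω, hτG (Fin.last n) ω]
      rw [this]
      exact hw
    -- key: τ_last ≤ lam
    have hql : τ (Fin.last n) ω ≤ ((lam ω : ℝ) : EReal) := by
      by_cases hbot : τ (Fin.last n) ω = ⊥
      · rw [hbot]; exact bot_le
      · obtain ⟨r, hr⟩ : ∃ r : ℝ, τ (Fin.last n) ω = (r : EReal) := by
          lift τ (Fin.last n) ω to ℝ using ⟨hτtop _ _, hbot⟩ with r hr
          exact ⟨r, rfl⟩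
        rw [hr, EReal.coe_le_coe_iff, hlam ω]
        apply le_csInf
        · obtain ⟨L, hL⟩ : ∃ L : ℝ, ∀ i : Fin n, τ i.castSucc ω ≤ (L : EReal) := by
            have hsup : (Finset.univ.sup fun i : Fin n => τ i.castSucc ω) < ⊤ := by
              apply (Finset.sup_lt_iff (by norm_num : (⊥ : EReal) < ⊤)).mpr
              intro i _
              exact lt_top_iff_ne_top.mpr (hτtop _ _)
            obtain ⟨L, hL1, _⟩ := EReal.exists_between_coe_real hsup
            exact ⟨L, fun i =>
              le_of_lt (lt_of_le_of_lt (Finset.le_sup (f := fun i : Fin n => τ i.castSucc ω) (Finset.mem_univ i)) hL1)⟩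
          refine ⟨L, ?_⟩
          simp only [Set.mem_setOf_eq]
          have hfull : (Finset.univ.filter fun i : Fin n => τ i.castSucc ω ≤ (L : EReal))
              = Finset.univ := by
            apply Finset.filter_true_of_mem
            intro i _
            exact hL i
          rw [hfull, Finset.card_univ, Fintype.card_fin]
          exact hceil
        · intro l hl
          by_contra hlr
          push_neg at hlr
          simp only [Set.mem_setOf_eq] at hl
          have hsub : (Finset.univ.filter fun i : Fin n => τ i.castSucc ω ≤ (l : EReal))
              ⊆ Finset.univ.filter fun i : Fin n => τ i.castSucc ω < τ (Fin.last n) ω := by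
            intro i hi
            simp only [Finset.mem_filter, Finset.mem_univ, true_and] at hi ⊢
            rw [hr]
            exact lt_of_le_of_lt hi (by exact_mod_cast hlr)
          have hcs : (Finset.univ.filter fun i : Fin n =>
              τ i.castSucc ω < τ (Fin.last n) ω).card
              ≤ (Finset.univ.filter fun i : Fin (n + 1) =>
                τ i ω < τ (Fin.last n) ω).card := by
            apply Finset.card_le_card_of_injOn Fin.castSucc
            · intro i hi
              simp only [Finset.mem_coe, Finset.mem_filter, Finset.mem_univ, true_and] at hi ⊢
              exact hi
            · exact (Fin.castSucc_injective n).injOn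
          have h1 := Finset.card_le_card hsub
          omega
    constructor
    · intro v hv
      by_contra hvB
      have hle : ((b (X (Fin.last n) ω) v : ℝ) : EReal) ≤ τ (Fin.last n) ω := by
        rw [hτ]
        exact le_sSup ⟨v, hvB, rfl⟩
      have hle2 := le_trans hle hql
      rw [EReal.coe_le_coe_iff] at hle2
      exact absurd hv (not_lt.mpr hle2)
    · exact hβ _
  -- final arithmetic
  have hfinal : ENNReal.ofReal (1 - α₁) ≤ P (D ⁻¹' S (Fin.last n)) := by
    have hne0 : ((n + 1 : ℕ) : ℝ≥0∞) ≠ 0 := by simp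
    have hnet : ((n + 1 : ℕ) : ℝ≥0∞) ≠ ⊤ := by simp
    rw [← ENNReal.mul_le_mul_iff_left hne0 hnet]
    calc ENNReal.ofReal (1 - α₁) * ((n + 1 : ℕ) : ℝ≥0∞)
        = ENNReal.ofReal ((1 - α₁) * ((n + 1 : ℕ) : ℝ)) := by
          rw [ENNReal.ofReal_mul (by linarith), ENNReal.ofReal_natCast]
      _ ≤ ENNReal.ofReal (k : ℝ) := by
          apply ENNReal.ofReal_le_ofReal
          have := Nat.le_ceil ((1 - α₁) * ((n : ℝ) + 1))
          rw [← hkdef] at this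
          push_cast
          linarith
      _ = (k : ℝ≥0∞) := ENNReal.ofReal_natCast k
      _ ≤ ((n + 1 : ℕ) : ℝ≥0∞) * P (D ⁻¹' S (Fin.last n)) := hsum
      _ = P (D ⁻¹' S (Fin.last n)) * ((n + 1 : ℕ) : ℝ≥0∞) := mul_comm _ _
  exact hfinal.trans (measure_mono hincl)
end

section
/- Let V be a finite nonempty type, 𝒳 a measurable space, and let (X_i, Y_i), i = 1, …, n+1, be an exchangeable sequence of random pairs on a probability space (Ω, 𝓕, P), with X_i taking values in 𝒳 and Y_i : V → {0,1}. Let β : ({0,1})^V → 𝒫(V) be a fixed measurable map satisfying {v ∈ V : Y(v) = 1} ⊆ β(Y) for every mask Y, and set B_i = β(Y_i). Let b : 𝒳 → (V → ℝ) be a fixed measurable score map. For each i define τ_i = max_{v ∈ B_i} b(X_i)(v), with the convention that the maximum over the empty set is −∞. Given α₂ ∈ (0,1) with ⌈(1−α₂)(n+1)⌉ ≤ n, let λ_O(α₂) = inf{λ ∈ ℝ : #{i ∈ {1,…,n} : τ_i ≤ λ} ≥ ⌈(1−α₂)(n+1)⌉} and define O(X) = {v ∈ V : b(X)(v) ≤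 λ_O(α₂)}. Then P( {v ∈ V : Y_{n+1}(v) = 1} ⊆ B_{n+1} ⊆ O(X_{n+1}) ) ≥ 1 − α₂. -/
open MeasureTheory
open scoped ENNReal

private lemma aux_card_perm {N : ℕ} (σ : Equiv.Perm (Fin N)) (p : Fin N → Prop)
    [DecidablePred p] :
    (Finset.univ.filter fun i => p (σ i)).card = (Finset.univ.filter p).card := by
  apply Finset.card_bij' (fun i _ => σ i) (fun i _ => σ.symm i) <;> simp

private lemma aux_rank {N k : ℕ} (hk : k ≤ N) (t : Fin N → EReal) :
    k ≤ (Finset.univ.filter fun j =>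
      (Finset.univ.filter fun i => t i < t j).card < k).card := by
  classical
  set σ := Tuple.sort t with hσ
  have hmono := Tuple.monotone_sort t
  have hlt : ∀ m ∈ Finset.range k, m < N := fun m hm =>
    lt_of_lt_of_le (Finset.mem_range.mp hm) hk
  set s : Finset (Fin N) := (Finset.range k).attachFin hlt with hs
  have hcard_s : s.card = k := by
    rw [hs, Finset.card_attachFin, Finset.card_range]
  have hsub : s.image σ ⊆ Finset.univ.filter fun j =>
      (Finset.univ.filter fun i => t i < t j).card < k := by
    intro j hj
    obtain ⟨j', hj', rfl⟩ := Finset.mem_image.mp hj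
    have hj'k : (j' : ℕ) < k := by
      have := (Finset.mem_attachFin hlt).mp hj'
      simpa using this
    refine Finset.mem_filter.mpr ⟨Finset.mem_univ _, ?_⟩
    have h1 : (Finset.univ.filter fun i => t i < t (σ j')).card
        = (Finset.univ.filter fun i => t (σ i) < t (σ j')).card :=
      (aux_card_perm σ (fun i => t i < t (σ j'))).symm
    rw [h1]
    have h2 : (Finset.univ.filter fun i => t (σ i) < t (σ j'))
        ⊆ Finset.univ.filter fun i => i < j' := by
      intro i hi
      rw [Finset.mem_filter] at hi ⊢
      refine ⟨hi.1, ?_⟩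
      by_contra h
      exact absurd (hmono (not_lt.mp h : j' ≤ i)) (not_le.mpr hi.2)
    calc (Finset.univ.filter fun i => t (σ i) < t (σ j')).card
        ≤ (Finset.univ.filter fun i => i < j').card := Finset.card_le_card h2
      _ = (Finset.Iio j').card := by congr 1; ext i; simp
      _ = (j' : ℕ) := Fin.card_Iio j'
      _ < k := hj'k
  calc k = (s.image σ).card := by
        rw [Finset.card_image_of_injective s σ.injective, hcard_s]
    _ ≤ _ := Finset.card_le_card hsub


open scoped Classical in
/-- Marginal outer bounding-box corollary: applying the outer conformal construction to
the derived sets `Bᵢ = β(Yᵢ)` (a fixed deterministic map of the mask, with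
`{v | Y v = 1} ⊆ β(Y)`) gives `P({v | Y_{n+1} v = 1} ⊆ B_{n+1} ⊆ O(X_{n+1})) ≥ 1 - α₂`. -/
theorem marginal_outer_bounding_box
    {Ω : Type*} [MeasurableSpace Ω] (P : Measure Ω) [IsProbabilityMeasure P]
    {V : Type*} [Fintype V] [Nonempty V]
    {𝓧 : Type*} [MeasurableSpace 𝓧]
    (n : ℕ) (X : Fin (n + 1) → Ω → 𝓧) (Y : Fin (n + 1) → Ω → V → Bool)
    (hX : ∀ i, Measurable (X i)) (hY : ∀ i, Measurable (Y i))
    (hexch : ∀ σ : Equiv.Perm (Fin (n + 1)),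
      Measure.map (fun ω => fun i => (X (σ i) ω, Y (σ i) ω)) P =
        Measure.map (fun ω => fun i => (X i ω, Y i ω)) P)
    (β : (V → Bool) → Set V) (hβ : ∀ m : V → Bool, {v | m v = true} ⊆ β m)
    (b : 𝓧 → V → ℝ) (hb : Measurable b)
    (τ : Fin (n + 1) → Ω → EReal)
    (hτ : ∀ i ω, τ i ω =
      sSup ((fun v => ((b (X i ω) v : ℝ) : EReal)) '' (β (Y i ω))))
    (α₂ : ℝ) (hα₂ : α₂ ∈ Set.Ioo (0 : ℝ) 1)
    (hceil : ⌈(1 - α₂) * ((n : ℝ) + 1)⌉₊ ≤ n)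
    (lam : Ω → ℝ)
    (hlam : ∀ ω, lam ω = sInf {l : ℝ | ⌈(1 - α₂) * ((n : ℝ) + 1)⌉₊ ≤
      (Finset.univ.filter (fun i : Fin n => τ i.castSucc ω ≤ (l : EReal))).card}) :
    ENNReal.ofReal (1 - α₂) ≤
      P {ω | {v | Y (Fin.last n) ω v = true} ⊆ β (Y (Fin.last n) ω) ∧
        β (Y (Fin.last n) ω) ⊆ {v | b (X (Fin.last n) ω) v ≤ lam ω}} := by
  classical
  obtain ⟨hα₂0, hα₂1⟩ := hα₂
  set k : ℕ := ⌈(1 - α₂) * ((n : ℝ) + 1)⌉₊ with hkdef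
  have hkpos : 0 < k := Nat.ceil_pos.mpr (by nlinarith)
  have hnpos : 0 < n := lt_of_lt_of_le hkpos hceil
  -- the score map on data points
  set g : 𝓧 × (V → Bool) → EReal :=
    fun p => sSup ((fun v => ((b p.1 v : ℝ) : EReal)) '' β p.2) with hgdef
  have hg : Measurable g := by
    apply measurable_from_prod_countable_left
    intro y
    have heq : (fun x => g (x, y)) = fun x => ⨆ v ∈ β y, ((b x v : ℝ) : EReal) := by
      funext x; exact sSup_image
    rw [heq]
    exact Measurable.biSup _ (Set.to_countable _)
      (fun v _ => measurable_coe_real_ereal.comp ((measurable_pi_apply v).comp hb))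
  set Z : Ω → (Fin (n + 1) → 𝓧 × (V → Bool)) := fun ω i => (X i ω, Y i ω) with hZdef
  have hZ : Measurable Z := measurable_pi_lambda _ fun i => (hX i).prodMk (hY i)
  have hτg : ∀ i ω, τ i ω = g (Z ω i) := fun i ω => hτ i ω
  -- the rank events
  set A : Fin (n + 1) → Set (Fin (n + 1) → 𝓧 × (V → Bool)) :=
    fun j => {z | (Finset.univ.filter fun i => g (z i) < g (z j)).card < k} with hAdef
  have hA : ∀ j, MeasurableSet (A j) := by
    intro j
    have hcnt : Measurable fun z : Fin (n + 1) → 𝓧 × (V → Bool) =>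
        (Finset.univ.filter fun i => g (z i) < g (z j)).card := by
      have heq : (fun z : Fin (n + 1) → 𝓧 × (V → Bool) =>
          (Finset.univ.filter fun i => g (z i) < g (z j)).card)
          = fun z => ∑ i : Fin (n + 1), if g (z i) < g (z j) then 1 else 0 := by
        funext z; simp [Finset.sum_boole]
      rw [heq]
      exact Finset.measurable_sum _ fun i _ => Measurable.ite
        (measurableSet_lt (hg.comp (measurable_pi_apply i)) (hg.comp (measurable_pi_apply j)))
        measurable_const measurable_const
    exact hcnt measurableSet_Iio
  -- all events have the same probability
  have hswap : ∀ j, P (Z ⁻¹' A j) = P (Z ⁻¹' A (Fin.last n)) := by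
    intro j
    set σ := Equiv.swap j (Fin.last n) with hσ
    have hAeq : A j = (fun z : Fin (n + 1) → 𝓧 × (V → Bool) => fun i => z (σ i)) ⁻¹' A (Fin.last n) := by
      ext z
      simp only [hAdef, Set.mem_preimage, Set.mem_setOf_eq]
      have h1 : σ (Fin.last n) = j := Equiv.swap_apply_right _ _
      have hc : (Finset.univ.filter fun i => g (z (σ i)) < g (z (σ (Fin.last n)))).card
          = (Finset.univ.filter fun i => g (z i) < g (z j)).card := by
        simp only [h1]
        exact aux_card_perm σ (fun i => g (z i) < g (z j))
      omega
    have hm2 : Measurable (fun ω => fun i => (X (σ i) ω, Y (σ i) ω)) :=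
      measurable_pi_lambda _ fun i => (hX (σ i)).prodMk (hY (σ i))
    calc P (Z ⁻¹' A j)
        = P ((fun ω => fun i => (X (σ i) ω, Y (σ i) ω)) ⁻¹' A (Fin.last n)) := by
          rw [hAeq]; rfl
      _ = Measure.map (fun ω => fun i => (X (σ i) ω, Y (σ i) ω)) P (A (Fin.last n)) :=
          (Measure.map_apply hm2 (hA _)).symm
      _ = Measure.map (fun ω => fun i => (X i ω, Y i ω)) P (A (Fin.last n)) := by rw [hexch σ]
      _ = P (Z ⁻¹' A (Fin.last n)) := Measure.map_apply hZ (hA _)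
  -- pointwise: at least k of the events hold
  have hpt : ∀ ω, k ≤ (Finset.univ.filter fun j => ω ∈ Z ⁻¹' A j).card := by
    intro ω
    have h := aux_rank (k := k) (by omega : k ≤ n + 1) (fun i => g (Z ω i))
    have hEq : (Finset.univ.filter fun j => ω ∈ Z ⁻¹' A j)
        = Finset.univ.filter (fun j =>
            (Finset.univ.filter fun i => g (Z ω i) < g (Z ω j)).card < k) := by
      apply Finset.filter_congr
      intro j _
      exact Iff.rfl
    rw [hEq]
    exact h
  -- sum bound
  have hsum : (k : ℝ≥0∞) ≤ ∑ j : Fin (n + 1), P (Z ⁻¹' A j) := by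
    have hmeas : ∀ j : Fin (n + 1),
        Measurable ((Z ⁻¹' A j).indicator (fun _ => (1 : ℝ≥0∞))) :=
      fun j => measurable_const.indicator (hZ (hA j))
    calc (k : ℝ≥0∞) = ∫⁻ _, (k : ℝ≥0∞) ∂P := by simp
      _ ≤ ∫⁻ ω, ∑ j : Fin (n + 1), (Z ⁻¹' A j).indicator (fun _ => (1 : ℝ≥0∞)) ω ∂P := by
          apply lintegral_mono
          intro ω
          dsimp only
          have heq : ∑ j : Fin (n + 1), (Z ⁻¹' A j).indicator (fun _ => (1 : ℝ≥0∞)) ω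
              = ((Finset.univ.filter fun j => ω ∈ Z ⁻¹' A j).card : ℝ≥0∞) := by
            simp [Set.indicator_apply, Finset.sum_boole]
            convert (Finset.natCast_card_filter _ _).symm
          rw [heq]
          exact_mod_cast Nat.cast_le.mpr (hpt ω)
      _ = ∑ j : Fin (n + 1), ∫⁻ ω, (Z ⁻¹' A j).indicator (fun _ => (1 : ℝ≥0∞)) ω ∂P :=
          lintegral_finset_sum _ (fun j _ => hmeas j)
      _ = ∑ j : Fin (n + 1), P (Z ⁻¹' A j) := by
          refine Finset.sum_congr rfl fun j _ => ?_
          exact lintegral_indicator_one (hZ (hA j))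
  have hsum2 : (k : ℝ≥0∞) ≤ (n + 1 : ℝ≥0∞) * P (Z ⁻¹' A (Fin.last n)) := by
    calc (k : ℝ≥0∞) ≤ ∑ j : Fin (n + 1), P (Z ⁻¹' A j) := hsum
      _ = ∑ _j : Fin (n + 1), P (Z ⁻¹' A (Fin.last n)) :=
          Finset.sum_congr rfl fun j _ => hswap j
      _ = (n + 1 : ℝ≥0∞) * P (Z ⁻¹' A (Fin.last n)) := by
          rw [Finset.sum_const, Finset.card_univ, Fintype.card_fin]
          simp [nsmul_eq_mul]
  -- probability lower bound on the last rank event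
  have hprob : ENNReal.ofReal (1 - α₂) ≤ P (Z ⁻¹' A (Fin.last n)) := by
    rw [← ENNReal.mul_le_mul_iff_left (c := (n + 1 : ℝ≥0∞)) (lt_of_lt_of_le one_pos le_add_self).ne' (by simp)]
    calc ENNReal.ofReal (1 - α₂) * (n + 1 : ℝ≥0∞)
        = ENNReal.ofReal ((1 - α₂) * ((n : ℝ) + 1)) := by
          rw [ENNReal.ofReal_mul (by linarith)]
          congr 1
          rw [show ((n : ℝ) + 1) = ((n + 1 : ℕ) : ℝ) by push_cast; ring,
            ENNReal.ofReal_natCast]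
          push_cast; ring
      _ ≤ (k : ℝ≥0∞) := by
          rw [← ENNReal.ofReal_natCast k]
          exact ENNReal.ofReal_le_ofReal (Nat.le_ceil _)
      _ ≤ (n + 1 : ℝ≥0∞) * P (Z ⁻¹' A (Fin.last n)) := hsum2
      _ = P (Z ⁻¹' A (Fin.last n)) * (n + 1 : ℝ≥0∞) := mul_comm _ _
  -- inclusion into the target event
  refine le_trans hprob (measure_mono ?_)
  intro ω hω
  simp only [hAdef, Set.mem_preimage, Set.mem_setOf_eq] at hω
  refine ⟨hβ _, ?_⟩
  intro v hv
  simp only [Set.mem_setOf_eq]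
  rw [hlam ω]
  -- the set S is nonempty
  have hSne : {l : ℝ | k ≤
      (Finset.univ.filter (fun i : Fin n => τ i.castSucc ω ≤ (l : EReal))).card}.Nonempty := by
    have hV : (Finset.univ : Finset V).Nonempty := Finset.univ_nonempty
    have hFn : (Finset.univ : Finset (Fin n)).Nonempty := by
      have : Nonempty (Fin n) := Fin.pos_iff_nonempty.mp hnpos
      exact Finset.univ_nonempty
    set m : Fin n → ℝ := fun i => Finset.univ.sup' hV (b (X i.castSucc ω)) with hm
    set l₀ : ℝ := Finset.univ.sup' hFn m with hl₀
    refine ⟨l₀, ?_⟩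
    have hall : ∀ i : Fin n, τ i.castSucc ω ≤ (l₀ : EReal) := by
      intro i
      rw [hτ]
      apply sSup_le
      rintro x ⟨v', _, rfl⟩
      have h1 : b (X i.castSucc ω) v' ≤ l₀ :=
        le_trans (Finset.le_sup' _ (Finset.mem_univ v')) (Finset.le_sup' m (Finset.mem_univ i))
      dsimp only
      exact_mod_cast h1
    have : (Finset.univ.filter (fun i : Fin n => τ i.castSucc ω ≤ (l₀ : EReal)))
        = Finset.univ := by
      apply Finset.filter_true_of_mem
      intro i _; exact hall i
    simp only [Set.mem_setOf_eq, this, Finset.card_univ, Fintype.card_fin]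
    exact hceil
  refine le_csInf hSne ?_
  intro l hl
  simp only [Set.mem_setOf_eq] at hl
  by_contra hcon
  push_neg at hcon
  -- each of the k small indices witnesses a strictly smaller score
  have hsubset : (Finset.univ.filter (fun i : Fin n => τ i.castSucc ω ≤ (l : EReal))).map
      Fin.castSuccEmb ⊆
      Finset.univ.filter fun i : Fin (n + 1) => g (Z ω i) < g (Z ω (Fin.last n)) := by
    intro i hi
    obtain ⟨i', hi', rfl⟩ := Finset.mem_map.mp hi
    rw [Finset.mem_filter] at hi'
    refine Finset.mem_filter.mpr ⟨Finset.mem_univ _, ?_⟩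
    have h1 : g (Z ω (Fin.castSuccEmb i')) ≤ (l : EReal) := by
      rw [← hτg]; exact hi'.2
    have h2 : ((b (X (Fin.last n) ω) v : ℝ) : EReal) ≤ g (Z ω (Fin.last n)) := by
      rw [← hτg, hτ]
      exact le_sSup ⟨v, hv, rfl⟩
    have h3 : (l : EReal) < ((b (X (Fin.last n) ω) v : ℝ) : EReal) := by
      exact_mod_cast hcon
    exact lt_of_le_of_lt h1 (lt_of_lt_of_le h3 h2)
  have := Finset.card_le_card hsubset
  rw [Finset.card_map] at this
  omega
end

section
/- Let V be a finite nonempty type, 𝒳 a measurable space, and let (X_i, Y_i), i = 1, …, n+1, be an exchangeable sequence of random pairs on a probability space (Ω, 𝓕, P), with X_i taking values in 𝒳 and Y_i : V → {0,1}. Let f_I, f_O : 𝒳 → (V → ℝ) be fixed measurable score maps. Define inner calibration scores τ_i^I = max_{v : Y_i(v)=0} f_I(X_i)(v) and outer calibration scores τ_i^O = max_{v : Y_i(v)=1} (−f_O(X_i)(v)) (maxima over the empty set being −∞). Given α₁, α₂ ∈ (0,1) with ⌈(1−α₁)(n+1)⌉ ≤ n and ⌈(1−α₂)(n+1)⌉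 ≤ n, let λ_I(α₁) and λ_O(α₂) be the corresponding conformal thresholds inf{λ : #{i ≤ n : τ_i^I ≤ λ} ≥ ⌈(1−α₁)(n+1)⌉} and inf{λ : #{i ≤ n : τ_i^O ≤ λ} ≥ ⌈(1−α₂)(n+1)⌉}, and define I(X) = {v : f_I(X)(v) > λ_I(α₁)} and O(X) = {v : −f_O(X)(v) ≤ λ_O(α₂)}. Then P( I(X_{n+1}) ⊆ {v ∈ V : Y_{n+1}(v) = 1} ⊆ O(X_{n+1}) ) ≥ 1 − α₁ − α₂. -/
open MeasureTheory
open scoped ENNReal BigOperators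

open scoped Classical in
lemma rank_count {β : Type*} [LinearOrder β] (m k : ℕ) (hk : k ≤ m) (F : Fin m → β) :
    k ≤ (Finset.univ.filter fun j : Fin m =>
      (Finset.univ.filter fun i : Fin m => F i < F j).card < k).card := by
  classical
  set G : Fin m → β ×ₗ (Fin m) := fun i => toLex (F i, i) with hG
  have hGinj : Function.Injective G := by
    intro i j h
    have := congrArg (fun x => (ofLex x).2) h
    exact this
  set r : Fin m → ℕ := fun j => (Finset.univ.filter fun i : Fin m => G i < G j).card with hr
  have hrlt : ∀ j, r j < m := by
    intro j
    have hsub : (Finset.univ.filter fun i : Fin m => G i < G j) ⊆ Finset.univ.erase j := by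
      intro i hi
      simp only [Finset.mem_filter] at hi
      exact Finset.mem_erase.2 ⟨fun h => absurd (h ▸ hi.2) (lt_irrefl _), Finset.mem_univ _⟩
    calc r j ≤ (Finset.univ.erase j).card := Finset.card_le_card hsub
      _ < Finset.univ.card := Finset.card_erase_lt_of_mem (Finset.mem_univ j)
      _ = m := by simp
  have hrmono : ∀ i j, G i < G j → r i < r j := by
    intro i j hij
    apply Finset.card_lt_card
    constructor
    · intro a ha
      simp only [Finset.mem_filter, Finset.mem_univ, true_and] at ha ⊢
      exact ha.trans hij
    · intro hsub
      have : i ∈ Finset.univ.filter fun a : Fin m => G a < G j := by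
        simp [hij]
      have := hsub this
      simp at this
  have hrinj : Function.Injective r := by
    intro i j h
    by_contra hne
    rcases lt_or_gt_of_ne (fun hGij => hne (hGinj hGij) : G i ≠ G j) with hl | hl
    · exact absurd h (Nat.ne_of_lt (hrmono _ _ hl))
    · exact absurd h.symm (Nat.ne_of_lt (hrmono _ _ hl))
  set e : Fin m → Fin m := fun j => ⟨r j, hrlt j⟩ with he
  have heinj : Function.Injective e := by
    intro i j h
    exact hrinj (congrArg Fin.val h)
  have hesurj : Function.Surjective e := Finite.surjective_of_injective heinj
  -- card of {j | r j < k} = k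
  have hcard : (Finset.univ.filter fun j : Fin m => r j < k).card
      = (Finset.univ.filter fun x : Fin m => (x : ℕ) < k).card := by
    apply Finset.card_bij (fun j _ => e j)
    · intro a ha
      simp only [Finset.mem_filter, Finset.mem_univ, true_and] at ha ⊢
      exact ha
    · intro a _ b _ h
      exact heinj h
    · intro x hx
      obtain ⟨j, hj⟩ := hesurj x
      refine ⟨j, ?_, hj⟩
      simp only [Finset.mem_filter, Finset.mem_univ, true_and] at hx ⊢
      rw [← hj] at hx
      exact hx
  have hcard2 : (Finset.univ.filter fun x : Fin m => (x : ℕ) < k).card = k := by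
    apply Finset.card_eq_of_bijective (fun i hi => ⟨i, lt_of_lt_of_le hi hk⟩)
    · intro a ha
      simp only [Finset.mem_filter, Finset.mem_univ, true_and] at ha
      exact ⟨a, ha, rfl⟩
    · intro i hi
      simp only [Finset.mem_filter, Finset.mem_univ, true_and]
      exact hi
    · intro i j hi hj h
      exact congrArg Fin.val h
  have hsub : (Finset.univ.filter fun j : Fin m => r j < k) ⊆
      Finset.univ.filter fun j : Fin m =>
        (Finset.univ.filter fun i : Fin m => F i < F j).card < k := by
    intro j hj
    simp only [Finset.mem_filter, Finset.mem_univ, true_and] at hj ⊢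
    refine lt_of_le_of_lt ?_ hj
    apply Finset.card_le_card
    intro i hi
    simp only [Finset.mem_filter, Finset.mem_univ, true_and] at hi ⊢
    exact Prod.Lex.left _ _ hi
  calc k = (Finset.univ.filter fun x : Fin m => (x : ℕ) < k).card := hcard2.symm
    _ = (Finset.univ.filter fun j : Fin m => r j < k).card := hcard.symm
    _ ≤ _ := Finset.card_le_card hsub

open scoped Classical in
lemma marginal_coverage
    {Ω : Type*} [MeasurableSpace Ω] (P : Measure Ω) [IsProbabilityMeasure P]
    {V : Type*} [Fintype V] [Nonempty V]
    {𝓧 : Type*} [MeasurableSpace 𝓧]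
    (n : ℕ) (X : Fin (n + 1) → Ω → 𝓧) (Y : Fin (n + 1) → Ω → V → Bool)
    (hX : ∀ i, Measurable (X i)) (hY : ∀ i, Measurable (Y i))
    (hexch : ∀ σ : Equiv.Perm (Fin (n + 1)),
      Measure.map (fun ω => fun i => (X (σ i) ω, Y (σ i) ω)) P =
        Measure.map (fun ω => fun i => (X i ω, Y i ω)) P)
    (g : 𝓧 → V → ℝ) (hg : Measurable g) (b : Bool)
    (τ : Fin (n + 1) → Ω → EReal)
    (hτ : ∀ i ω, τ i ω =
      sSup ((fun v => ((g (X i ω) v : ℝ) : EReal)) '' {v | Y i ω v = b}))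
    (k : ℕ) (hk1 : 1 ≤ k) (hkn : k ≤ n)
    (lam : Ω → ℝ)
    (hlam : ∀ ω, lam ω = sInf {l : ℝ | k ≤
      (Finset.univ.filter (fun i : Fin n => τ i.castSucc ω ≤ (l : EReal))).card}) :
    ∃ E : Set Ω, MeasurableSet E ∧
      (∀ ω ∈ E, ∀ v, Y (Fin.last n) ω v = b → g (X (Fin.last n) ω) v ≤ lam ω) ∧
      ((k : ℝ≥0∞) ≤ ((n + 1 : ℕ) : ℝ≥0∞) * P E) := by
  classical
  set score : 𝓧 × (V → Bool) → EReal :=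
    fun p => sSup ((fun v => ((g p.1 v : ℝ) : EReal)) '' {v | p.2 v = b}) with hscore
  have hms : Measurable score := by
    have heq : score = fun p => ⨆ v : V, if p.2 v = b then ((g p.1 v : ℝ) : EReal) else ⊥ := by
      funext p
      simp only [hscore]
      rw [sSup_image]
      apply le_antisymm
      · exact iSup₂_le fun v hv => le_iSup_of_le v (by rw [if_pos (show p.2 v = b from hv)])
      · refine iSup_le fun v => ?_
        split_ifs with h
        · exact le_iSup₂_of_le v h le_rfl
        · exact bot_le
    rw [heq]
    refine Measurable.iSup fun v => ?_
    refine Measurable.ite ?_ ?_ measurable_const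
    · have : Measurable fun p : 𝓧 × (V → Bool) => p.2 v :=
        (measurable_pi_apply v).comp measurable_snd
      exact this (measurableSet_singleton b)
    · exact measurable_coe_real_ereal.comp (((measurable_pi_apply v).comp hg).comp measurable_fst)
  set Z : Ω → (Fin (n + 1) → 𝓧 × (V → Bool)) := fun ω i => (X i ω, Y i ω) with hZ
  have hmZ : Measurable Z := measurable_pi_lambda _ fun i => (hX i).prodMk (hY i)
  have hτZ : ∀ i ω, τ i ω = score (Z ω i) := fun i ω => hτ i ω
  set c : (Fin (n + 1) → 𝓧 × (V → Bool)) → Fin (n + 1) → ℕ :=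
    fun z j => ∑ i : Fin (n + 1), if score (z i) < score (z j) then 1 else 0 with hc
  have hcfilter : ∀ z j, c z j
      = (Finset.univ.filter fun i => score (z i) < score (z j)).card := by
    intro z j
    rw [hc, Finset.card_filter]
  set Bs : Fin (n + 1) → Set (Fin (n + 1) → 𝓧 × (V → Bool)) := fun j => {z | c z j < k}
    with hBs
  have hmc : ∀ j, Measurable fun z => c z j := by
    intro j
    refine Finset.measurable_sum _ fun i _ => ?_
    refine Measurable.ite ?_ measurable_const measurable_const
    exact measurableSet_lt (hms.comp (measurable_pi_apply i)) (hms.comp (measurable_pi_apply j))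
  have hmB : ∀ j, MeasurableSet (Bs j) :=
    fun j => (hmc j) (measurableSet_Iio : MeasurableSet (Set.Iio k))
  have hdet : ∀ z, k ≤ (Finset.univ.filter fun j => c z j < k).card := by
    intro z
    have h := rank_count (n + 1) k (by omega) (fun i => score (z i))
    have hfeq : (Finset.univ.filter fun j => c z j < k)
        = Finset.univ.filter
          (fun j => (Finset.univ.filter fun i => score (z i) < score (z j)).card < k) :=
      Finset.filter_congr fun j _ => by rw [hcfilter]
    rw [hfeq]
    convert h using 2
  -- equal probabilities via exchangeability
  have hswap : ∀ j, P (Z ⁻¹' Bs j) = P (Z ⁻¹' Bs (Fin.last n)) := by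
    intro j
    set σ := Equiv.swap j (Fin.last n) with hσ
    have hmZσ : Measurable fun ω => fun i => (X (σ i) ω, Y (σ i) ω) :=
      measurable_pi_lambda _ fun i => (hX (σ i)).prodMk (hY (σ i))
    have hset : Z ⁻¹' Bs j = (fun ω => fun i => (X (σ i) ω, Y (σ i) ω)) ⁻¹' Bs (Fin.last n) := by
      ext ω
      have hfun : (fun i => (X (σ i) ω, Y (σ i) ω)) = fun i => Z ω (σ i) := rfl
      simp only [Set.mem_preimage, hBs, Set.mem_setOf_eq, hfun]
      have hcc : c (fun i => Z ω (σ i)) (Fin.last n) = c (Z ω) j := by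
        rw [hc]
        have hσl : σ (Fin.last n) = j := Equiv.swap_apply_right _ _
        simp only [hσl]
        exact Equiv.sum_comp σ fun i => if score (Z ω i) < score (Z ω j) then 1 else 0
      rw [hcc]
    rw [hset, ← Measure.map_apply hmZσ (hmB _), hexch σ, Measure.map_apply hmZ (hmB _)]
  -- expectation bound
  have hsum : (k : ℝ≥0∞) ≤ ∑ j : Fin (n + 1), P (Z ⁻¹' Bs j) := by
    have hptw : ∀ ω, (k : ℝ≥0∞) ≤
        ∑ j : Fin (n + 1), (Bs j).indicator (fun _ => (1 : ℝ≥0∞)) (Z ω) := by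
      intro ω
      calc (k : ℝ≥0∞) ≤ ((Finset.univ.filter fun j => c (Z ω) j < k).card : ℝ≥0∞) := by
            exact_mod_cast hdet (Z ω)
        _ = ∑ j : Fin (n + 1), (Bs j).indicator (fun _ => (1 : ℝ≥0∞)) (Z ω) := by
            rw [Finset.card_filter, Nat.cast_sum]
            refine Finset.sum_congr rfl fun j _ => ?_
            rw [Set.indicator_apply]
            by_cases h : c (Z ω) j < k
            · rw [if_pos h, if_pos (show Z ω ∈ Bs j from h)]; simp
            · rw [if_neg h, if_neg (show Z ω ∉ Bs j from h)]; simp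
    calc (k : ℝ≥0∞) = ∫⁻ _, (k : ℝ≥0∞) ∂P := by simp
      _ ≤ ∫⁻ ω, ∑ j : Fin (n + 1), (Bs j).indicator (fun _ => (1 : ℝ≥0∞)) (Z ω) ∂P :=
          lintegral_mono hptw
      _ = ∑ j : Fin (n + 1), ∫⁻ ω, (Bs j).indicator (fun _ => (1 : ℝ≥0∞)) (Z ω) ∂P :=
          lintegral_finset_sum _ fun j _ => ((measurable_const.indicator (hmB j)).comp hmZ)
      _ = ∑ j : Fin (n + 1), P (Z ⁻¹' Bs j) := by
          refine Finset.sum_congr rfl fun j _ => ?_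
          have heq2 : (fun ω => (Bs j).indicator (fun _ => (1 : ℝ≥0∞)) (Z ω))
              = (Z ⁻¹' Bs j).indicator (fun _ => (1 : ℝ≥0∞)) := by
            funext ω
            by_cases h : Z ω ∈ Bs j
            · rw [Set.indicator_of_mem h, Set.indicator_of_mem (Set.mem_preimage.2 h)]
            · rw [Set.indicator_of_notMem h,
                Set.indicator_of_notMem (fun hh => h (Set.mem_preimage.1 hh))]
          rw [heq2]
          exact lintegral_indicator_one (hmZ (hmB j))
  refine ⟨Z ⁻¹' Bs (Fin.last n), hmZ (hmB _), ?_, ?_⟩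
  · -- coverage inclusion
    intro ω hω v hv
    have hvle : ((g (X (Fin.last n) ω) v : ℝ) : EReal) ≤ τ (Fin.last n) ω := by
      rw [hτ]
      exact le_sSup ⟨v, hv, rfl⟩
    suffices h : τ (Fin.last n) ω ≤ ((lam ω : ℝ) : EReal) by
      exact EReal.coe_le_coe_iff.mp (hvle.trans h)
    have hM : ∀ i : Fin (n + 1), τ i ω ≤
        ((Finset.univ.sup' Finset.univ_nonempty fun v => g (X i ω) v : ℝ) : EReal) := by
      intro i
      rw [hτ]
      refine sSup_le fun x hx => ?_
      obtain ⟨w, _, rfl⟩ := hx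
      exact EReal.coe_le_coe_iff.2 (Finset.le_sup' _ (Finset.mem_univ w))
    have hntop : τ (Fin.last n) ω ≠ ⊤ := by
      intro h
      have := hM (Fin.last n)
      rw [h] at this
      exact absurd this (by simp)
    by_cases hbot : τ (Fin.last n) ω = ⊥
    · rw [hbot]; exact bot_le
    set r : ℝ := (τ (Fin.last n) ω).toReal with hrdef
    have hrs : ((r : ℝ) : EReal) = τ (Fin.last n) ω := EReal.coe_toReal hntop hbot
    rw [← hrs]
    have hnpos : 0 < n := by omega
    have hne : Nonempty (Fin n) := ⟨⟨0, hnpos⟩⟩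
    set S : Set ℝ := {l : ℝ | k ≤
      (Finset.univ.filter (fun i : Fin n => τ i.castSucc ω ≤ (l : EReal))).card} with hS
    have hSne : S.Nonempty := by
      refine ⟨(Finset.univ : Finset (Fin n × V)).sup'
        Finset.univ_nonempty (fun p => g (X p.1.castSucc ω) p.2), ?_⟩
      rw [hS, Set.mem_setOf_eq]
      have hall : (Finset.univ.filter (fun i : Fin n => τ i.castSucc ω ≤
          (((Finset.univ : Finset (Fin n × V)).sup' Finset.univ_nonempty
            (fun p => g (X p.1.castSucc ω) p.2) : ℝ) : EReal))) = Finset.univ := by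
        refine Finset.filter_true_of_mem fun i _ => ?_
        rw [hτ]
        refine sSup_le fun x hx => ?_
        obtain ⟨w, _, rfl⟩ := hx
        refine EReal.coe_le_coe_iff.2 ?_
        exact Finset.le_sup' (fun p : Fin n × V => g (X p.1.castSucc ω) p.2)
          (Finset.mem_univ (i, w))
      rw [hall]
      simpa using hkn
    have hlb : ∀ l ∈ S, r ≤ l := by
      intro l hl
      by_contra hlt
      push_neg at hlt
      have hmemE : c (Z ω) (Fin.last n) < k := hω
      have hsub : (Finset.univ.filter (fun i : Fin n => τ i.castSucc ω ≤ (l : EReal))).card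
          ≤ c (Z ω) (Fin.last n) := by
        rw [hcfilter]
        refine Finset.card_le_card_of_injOn (fun i => i.castSucc) ?_
          (fun a _ b _ h => Fin.castSucc_injective n h)
        intro i hi
        simp only [Finset.mem_coe, Finset.mem_filter, Finset.mem_univ, true_and] at hi ⊢
        calc score (Z ω i.castSucc) = τ i.castSucc ω := (hτZ _ _).symm
          _ ≤ (l : EReal) := hi
          _ < (r : EReal) := by exact_mod_cast hlt
          _ = τ (Fin.last n) ω := hrs
          _ = score (Z ω (Fin.last n)) := hτZ _ _
      rw [hS, Set.mem_setOf_eq] at hl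
      omega
    have hfin : r ≤ sInf S := le_csInf hSne hlb
    rw [hlam ω]
    exact_mod_cast hfin
  · -- probability bound
    calc (k : ℝ≥0∞) ≤ ∑ j : Fin (n + 1), P (Z ⁻¹' Bs j) := hsum
      _ = ∑ _j : Fin (n + 1), P (Z ⁻¹' Bs (Fin.last n)) :=
          Finset.sum_congr rfl fun j _ => hswap j
      _ = ((n + 1 : ℕ) : ℝ≥0∞) * P (Z ⁻¹' Bs (Fin.last n)) := by
          rw [Finset.sum_const, Finset.card_univ, Fintype.card_fin, nsmul_eq_mul]


open scoped Classical in
/-- Joint conformal confidence set theorem with level splitting: the inner and outer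
conformal sets simultaneously sandwich the true mask with probability at least
`1 - α₁ - α₂`. -/
theorem joint_confidence_sets
    {Ω : Type*} [MeasurableSpace Ω] (P : Measure Ω) [IsProbabilityMeasure P]
    {V : Type*} [Fintype V] [Nonempty V]
    {𝓧 : Type*} [MeasurableSpace 𝓧]
    (n : ℕ) (X : Fin (n + 1) → Ω → 𝓧) (Y : Fin (n + 1) → Ω → V → Bool)
    (hX : ∀ i, Measurable (X i)) (hY : ∀ i, Measurable (Y i))
    (hexch : ∀ σ : Equiv.Perm (Fin (n + 1)),
      Measure.map (fun ω => fun i => (X (σ i) ω, Y (σ i) ω)) P =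
        Measure.map (fun ω => fun i => (X i ω, Y i ω)) P)
    (fI fO : 𝓧 → V → ℝ) (hfI : Measurable fI) (hfO : Measurable fO)
    (τI τO : Fin (n + 1) → Ω → EReal)
    (hτI : ∀ i ω, τI i ω =
      sSup ((fun v => ((fI (X i ω) v : ℝ) : EReal)) '' {v | Y i ω v = false}))
    (hτO : ∀ i ω, τO i ω =
      sSup ((fun v => ((-(fO (X i ω) v) : ℝ) : EReal)) '' {v | Y i ω v = true}))
    (α₁ α₂ : ℝ) (hα₁ : α₁ ∈ Set.Ioo (0 : ℝ) 1) (hα₂ : α₂ ∈ Set.Ioo (0 : ℝ) 1)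
    (hceil₁ : ⌈(1 - α₁) * ((n : ℝ) + 1)⌉₊ ≤ n)
    (hceil₂ : ⌈(1 - α₂) * ((n : ℝ) + 1)⌉₊ ≤ n)
    (lamI lamO : Ω → ℝ)
    (hlamI : ∀ ω, lamI ω = sInf {l : ℝ | ⌈(1 - α₁) * ((n : ℝ) + 1)⌉₊ ≤
      (Finset.univ.filter (fun i : Fin n => τI i.castSucc ω ≤ (l : EReal))).card})
    (hlamO : ∀ ω, lamO ω = sInf {l : ℝ | ⌈(1 - α₂) * ((n : ℝ) + 1)⌉₊ ≤
      (Finset.univ.filter (fun i : Fin n => τO i.castSucc ω ≤ (l : EReal))).card}) :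
    ENNReal.ofReal (1 - α₁ - α₂) ≤
      P {ω | {v | lamI ω < fI (X (Fin.last n) ω) v} ⊆ {v | Y (Fin.last n) ω v = true} ∧
        {v | Y (Fin.last n) ω v = true} ⊆ {v | -(fO (X (Fin.last n) ω) v) ≤ lamO ω}} := by
  classical
  have hk₁1 : 1 ≤ ⌈(1 - α₁) * ((n : ℝ) + 1)⌉₊ :=
    Nat.ceil_pos.mpr (by nlinarith [hα₁.1, hα₁.2, Nat.cast_nonneg (α := ℝ) n])
  have hk₂1 : 1 ≤ ⌈(1 - α₂) * ((n : ℝ) + 1)⌉₊ :=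
    Nat.ceil_pos.mpr (by nlinarith [hα₂.1, hα₂.2, Nat.cast_nonneg (α := ℝ) n])
  obtain ⟨E₁, hE₁m, hE₁cov, hE₁p⟩ :=
    marginal_coverage P n X Y hX hY hexch fI hfI false τI hτI
      (⌈(1 - α₁) * ((n : ℝ) + 1)⌉₊) hk₁1 hceil₁ lamI hlamI
  have hgO : Measurable (fun x => fun v => -(fO x v)) :=
    measurable_pi_lambda _ fun v => ((measurable_pi_apply v).comp hfO).neg
  obtain ⟨E₂, hE₂m, hE₂cov, hE₂p⟩ :=
    marginal_coverage P n X Y hX hY hexch (fun x v => -(fO x v)) hgO true τO hτO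
      (⌈(1 - α₂) * ((n : ℝ) + 1)⌉₊) hk₂1 hceil₂ lamO hlamO
  have hcast : ∀ (α : ℝ), 0 ≤ 1 - α → ∀ (E : Set Ω),
      ((⌈(1 - α) * ((n : ℝ) + 1)⌉₊ : ℝ≥0∞) ≤ ((n + 1 : ℕ) : ℝ≥0∞) * P E) →
      ENNReal.ofReal (1 - α) ≤ P E := by
    intro α hα0 E hE
    rw [← ENNReal.mul_le_mul_iff_left (a := ENNReal.ofReal (1 - α)) (b := P E)
      (c := ((n + 1 : ℕ) : ℝ≥0∞)) (by simp) (by simp)]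
    calc ENNReal.ofReal (1 - α) * ((n + 1 : ℕ) : ℝ≥0∞)
        = ENNReal.ofReal ((1 - α) * ((n : ℝ) + 1)) := by
          rw [ENNReal.ofReal_mul hα0, ← ENNReal.ofReal_natCast (n + 1)]
          congr 2
          push_cast
          ring
      _ ≤ (⌈(1 - α) * ((n : ℝ) + 1)⌉₊ : ℝ≥0∞) := by
          rw [← ENNReal.ofReal_natCast]
          exact ENNReal.ofReal_le_ofReal (Nat.le_ceil _)
      _ ≤ ((n + 1 : ℕ) : ℝ≥0∞) * P E := hE
      _ = P E * ((n + 1 : ℕ) : ℝ≥0∞) := mul_comm _ _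
  have h1 : ENNReal.ofReal (1 - α₁) ≤ P E₁ := hcast α₁ (by linarith [hα₁.2]) E₁ hE₁p
  have h2 : ENNReal.ofReal (1 - α₂) ≤ P E₂ := hcast α₂ (by linarith [hα₂.2]) E₂ hE₂p
  have hsubset : E₁ ∩ E₂ ⊆
      {ω | {v | lamI ω < fI (X (Fin.last n) ω) v} ⊆ {v | Y (Fin.last n) ω v = true} ∧
        {v | Y (Fin.last n) ω v = true} ⊆ {v | -(fO (X (Fin.last n) ω) v) ≤ lamO ω}} := by
    rintro ω ⟨h1ω, h2ω⟩
    constructor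
    · intro v hv
      simp only [Set.mem_setOf_eq] at hv ⊢
      by_contra hvt
      have hfalse : Y (Fin.last n) ω v = false := by
        cases hYv : Y (Fin.last n) ω v
        · rfl
        · exact absurd hYv hvt
      exact absurd hv (not_lt.2 (hE₁cov ω h1ω v hfalse))
    · intro v hv
      exact hE₂cov ω h2ω v hv
  by_cases hneg : 1 - α₁ - α₂ ≤ 0
  · calc ENNReal.ofReal (1 - α₁ - α₂) = 0 := ENNReal.ofReal_eq_zero.2 hneg
      _ ≤ _ := zero_le
  push_neg at hneg
  have hle : P E₁ + P E₂ ≤ 1 + P (E₁ ∩ E₂) := by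
    rw [← measure_union_add_inter (μ := P) E₁ hE₂m]
    exact add_le_add_left prob_le_one _
  have key : ENNReal.ofReal (1 - α₁ - α₂) + 1 ≤ P (E₁ ∩ E₂) + 1 := by
    have hring : (1 - α₁ - α₂) + 1 = (1 - α₁) + (1 - α₂) := by ring
    calc ENNReal.ofReal (1 - α₁ - α₂) + 1
        = ENNReal.ofReal (1 - α₁) + ENNReal.ofReal (1 - α₂) := by
          rw [← ENNReal.ofReal_one, ← ENNReal.ofReal_add hneg.le zero_le_one, hring,
            ENNReal.ofReal_add (by linarith [hα₁.2]) (by linarith [hα₂.2])]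
      _ ≤ P E₁ + P E₂ := add_le_add h1 h2
      _ ≤ 1 + P (E₁ ∩ E₂) := hle
      _ = P (E₁ ∩ E₂) + 1 := add_comm _ _
  exact ((ENNReal.add_le_add_iff_right ENNReal.one_ne_top).mp key).trans
    (measure_mono hsubset)
end
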